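/- arXiv:1504.04183 — 4 statements merged into one kernel-verified Lean document; each statement's English description precedes it below -/
import Mathlib

section
/- For all C₁ > 0 and C₂ > 0 there exist constants C₃ > 0 and C ≥ 1 such that for all 0 ≤ t < τ < T ≤ T₀ and all x, y ∈ ℝ^d, ∫_{ℝ^d} p̄_{C₁}(t,τ,x,z) · p̄_{C₂}(τ,T,z,y) dz ≤ C · p̄_{C₃}(t,T,x,y). -/
/-!
Write `ρ_h(r) = h^{-d/α} (1 + r / h^{1/α})^{-β}` with `β = α + γ`, so that
`p̄_c(t,s,x,y) = ρ_{s-t}(|θ_{t,s}(y) - x|) Q(c |θ_{t,s}(y) - x|)`.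
By Gronwall the flow is `L`-Lipschitz with `L = e^{K T₀}`, in both time directions, and it is
a two-parameter group; hence, with `a = |θ_{t,τ}(z) - x|`, `b = |θ_{τ,T}(y) - z|` and
`R = |θ_{t,T}(y) - x|`, we have `R ≤ L (a + b)`. So one of `a, b` is at least `R / 2L`, and one
of `τ - t, T - τ` is at least `(T - t) / 2`; comparing in the regimes `R ≤ (T-t)^{1/α}` and
`R ≥ (T-t)^{1/α}` gives `min (ρ_{τ-t}(a), ρ_{T-τ}(b)) ≲ ρ_{T-t}(R)`, while the `Q` factor with
the larger argument is at most `Q(C₃ R)` for `C₃ = min(C₁, C₂) / 2L`. Since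
`xy ≤ min(x,y) (x + y)`, the integrand is bounded by a multiple of
`ρ_{T-t}(R) Q(C₃ R) (ρ_{τ-t}(a) + ρ_{T-τ}(b))`, and each of the two kernels integrates in `z`
to at most `L^d ∫ (1 + |ζ|)^{-β} dζ < ∞`, as `β > d`.
-/

open MeasureTheory

noncomputable section

/-- The standard upper bound `p̄_c(t,s,x,y) = (s−t)^{−d/α} (1 + |θ_{t,s}(y)−x|/(s−t)^{1/α})^{−(α+γ)}
    Q(c |θ_{t,s}(y)−x|)`. -/
def pbar (d : ℕ) (α γ : ℝ)
    (θ : ℝ → ℝ → EuclideanSpace ℝ (Fin d) → EuclideanSpace ℝ (Fin d))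
    (Q : ℝ → ℝ) (c : ℝ) (t s : ℝ) (x y : EuclideanSpace ℝ (Fin d)) : ℝ :=
  (s - t) ^ (-(d : ℝ) / α) * (1 + ‖θ t s y - x‖ / (s - t) ^ (1 / α)) ^ (-(α + γ)) *
    Q (c * ‖θ t s y - x‖)

open Set Real
open scoped NNReal

section Gronwall

variable {E : Type*} [NormedAddCommGroup E] [NormedSpace ℝ E] {v : ℝ → E → E} {K : ℝ≥0}
  {lo hi : ℝ} {f g : ℝ → E}

lemma dist_le_of_trajectories_Icc_of_le (hv : ∀ t ∈ Icc lo hi, LipschitzWith K (v t))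
    (hf : ∀ t ∈ Icc lo hi, HasDerivWithinAt f (v t (f t)) (Icc lo hi) t)
    (hg : ∀ t ∈ Icc lo hi, HasDerivWithinAt g (v t (g t)) (Icc lo hi) t)
    {a b : ℝ} (ha : a ∈ Icc lo hi) (hb : b ∈ Icc lo hi) (hab : b ≤ a) :
    dist (f a) (g a) ≤ dist (f b) (g b) * exp (K * (a - b)) := by
  have hsub : Icc b a ⊆ Icc lo hi := Icc_subset_Icc hb.1 ha.2
  have hright : ∀ {h : ℝ → E}, (∀ t ∈ Icc lo hi, HasDerivWithinAt h (v t (h t)) (Icc lo hi) t) →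
      ∀ t ∈ Ico b a, HasDerivWithinAt h (v t (h t)) (Ici t) t := fun hh t ht =>
    (hh t (hsub (Ico_subset_Icc_self ht))).mono_of_mem_nhdsWithin <|
      Filter.mem_of_superset (Icc_mem_nhdsGE ht.2)
        (Icc_subset_Icc (hsub (Ico_subset_Icc_self ht)).1 ha.2)
  exact dist_le_of_trajectories_ODE_of_mem (s := fun _ => univ)
    (fun t ht => (hv t (hsub (Ico_subset_Icc_self ht))).lipschitzOnWith)
    (fun t ht => (hf t (hsub ht)).continuousWithinAt.mono hsub) (hright hf) (fun _ _ => trivial)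
    (fun t ht => (hg t (hsub ht)).continuousWithinAt.mono hsub) (hright hg) (fun _ _ => trivial)
    le_rfl a ⟨hab, le_rfl⟩

lemma dist_le_of_trajectories_Icc (hv : ∀ t ∈ Icc lo hi, LipschitzWith K (v t))
    (hf : ∀ t ∈ Icc lo hi, HasDerivWithinAt f (v t (f t)) (Icc lo hi) t)
    (hg : ∀ t ∈ Icc lo hi, HasDerivWithinAt g (v t (g t)) (Icc lo hi) t)
    {a b : ℝ} (ha : a ∈ Icc lo hi) (hb : b ∈ Icc lo hi) :
    dist (f a) (g a) ≤ dist (f b) (g b) * exp (K * |a - b|) := by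
  rcases le_total b a with hab | hab
  · rw [abs_of_nonneg (sub_nonneg.2 hab)]
    exact dist_le_of_trajectories_Icc_of_le hv hf hg ha hb hab
  -- reversing time turns the backward estimate into a forward one
  set σ : ℝ → ℝ := fun t => lo + hi - t
  have hσ : MapsTo σ (Icc lo hi) (Icc lo hi) := fun t ht =>
    ⟨by simp only [σ]; linarith [ht.2], by simp only [σ]; linarith [ht.1]⟩
  have hrev : ∀ {h : ℝ → E}, (∀ t ∈ Icc lo hi, HasDerivWithinAt h (v t (h t)) (Icc lo hi) t) →
      ∀ t ∈ Icc lo hi, HasDerivWithinAt (h ∘ σ) (-v (σ t) ((h ∘ σ) t)) (Icc lo hi) t := by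
    intro h hh t ht
    simpa using
      (hh (σ t) (hσ ht)).scomp t ((hasDerivAt_id t).const_sub (lo + hi)).hasDerivWithinAt hσ
  have hv' : ∀ t ∈ Icc lo hi, LipschitzWith K (fun x => -v (σ t) x) := fun t ht =>
    LipschitzWith.of_dist_le_mul fun x y => by
      simpa only [dist_neg_neg] using (hv (σ t) (hσ ht)).dist_le_mul x y
  have key := dist_le_of_trajectories_Icc_of_le hv' (hrev hf) (hrev hg) (hσ ha) (hσ hb)
    (by simp only [σ]; linarith)
  simp only [Function.comp, σ, sub_sub_sub_cancel_left, sub_sub_cancel] at key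
  rwa [abs_of_nonpos (sub_nonpos.2 hab), neg_sub]

end Gronwall

section Flow

variable {E : Type*} [NormedAddCommGroup E] [NormedSpace ℝ E]

def IsFlowOn (F : ℝ → E → E) (θ : ℝ → ℝ → E → E) (I : Set ℝ) : Prop :=
  ∀ s ∈ I, ∀ x, θ s s x = x ∧ ∀ u ∈ I, HasDerivWithinAt (fun v => θ v s x) (F u (θ u s x)) I u

namespace IsFlowOn

variable {F : ℝ → E → E} {θ : ℝ → ℝ → E → E} {K : ℝ≥0} {lo hi s₁ s₂ s₃ : ℝ}

lemma dist_le (hθ : IsFlowOn F θ (Icc lo hi)) (hF : ∀ t ∈ Icc lo hi, LipschitzWith K (F t))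
    (hs₁ : s₁ ∈ Icc lo hi) (hs₂ : s₂ ∈ Icc lo hi) (p q : E) :
    dist (θ s₁ s₂ p) (θ s₁ s₂ q) ≤ exp (K * (hi - lo)) * dist p q := by
  have h := dist_le_of_trajectories_Icc hF ((hθ s₂ hs₂ p).2) ((hθ s₂ hs₂ q).2) hs₁ hs₂
  rw [(hθ s₂ hs₂ p).1, (hθ s₂ hs₂ q).1, mul_comm] at h
  refine h.trans (mul_le_mul_of_nonneg_right (exp_le_exp.2 ?_) dist_nonneg)
  gcongr
  exact abs_sub_le_of_le_of_le hs₁.1 hs₁.2 hs₂.1 hs₂.2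

lemma apply_apply (hθ : IsFlowOn F θ (Icc lo hi)) (hF : ∀ t ∈ Icc lo hi, LipschitzWith K (F t))
    (hs₁ : s₁ ∈ Icc lo hi) (hs₂ : s₂ ∈ Icc lo hi) (hs₃ : s₃ ∈ Icc lo hi) (p : E) :
    θ s₁ s₂ (θ s₂ s₃ p) = θ s₁ s₃ p := by
  have h := dist_le_of_trajectories_Icc hF ((hθ s₂ hs₂ (θ s₂ s₃ p)).2) ((hθ s₃ hs₃ p).2) hs₁ hs₂
  rwa [(hθ s₂ hs₂ _).1, dist_self, zero_mul, dist_le_zero] at h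

lemma continuous (hθ : IsFlowOn F θ (Icc lo hi)) (hF : ∀ t ∈ Icc lo hi, LipschitzWith K (F t))
    (hs₁ : s₁ ∈ Icc lo hi) (hs₂ : s₂ ∈ Icc lo hi) : Continuous (θ s₁ s₂) :=
  (LipschitzWith.of_dist_le' (hθ.dist_le hF hs₁ hs₂)).continuous

variable {t τ T : ℝ}

lemma norm_apply_sub_le (hθ : IsFlowOn F θ (Icc lo hi))
    (hF : ∀ t ∈ Icc lo hi, LipschitzWith K (F t))
    (ht : t ∈ Icc lo hi) (hτ : τ ∈ Icc lo hi) (hT : T ∈ Icc lo hi) (x y z : E) :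
    ‖θ t T y - x‖ ≤ exp (K * (hi - lo)) * (‖θ t τ z - x‖ + ‖θ τ T y - z‖) := by
  have h := hθ.dist_le hF ht hτ (θ τ T y) z
  rw [hθ.apply_apply hF ht hτ hT, dist_eq_norm, dist_eq_norm] at h
  have hL : 1 ≤ exp (K * (hi - lo)) := one_le_exp (by have := ht.1.trans ht.2; positivity)
  calc ‖θ t T y - x‖ ≤ ‖θ t T y - θ t τ z‖ + ‖θ t τ z - x‖ :=
        norm_sub_le_norm_sub_add_norm_sub _ _ _
    _ ≤ _ := by nlinarith [norm_nonneg (θ t τ z - x)]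

lemma norm_sub_apply_le (hθ : IsFlowOn F θ (Icc lo hi))
    (hF : ∀ t ∈ Icc lo hi, LipschitzWith K (F t))
    (ht : t ∈ Icc lo hi) (hτ : τ ∈ Icc lo hi) (x z : E) :
    ‖z - θ τ t x‖ ≤ exp (K * (hi - lo)) * ‖θ t τ z - x‖ := by
  have h := hθ.dist_le hF hτ ht (θ t τ z) x
  rwa [hθ.apply_apply hF hτ ht hτ, (hθ τ hτ z).1, dist_eq_norm, dist_eq_norm] at h

end IsFlowOn

end Flow

lemma le_two_mul_or_le_two_mul_of_le_mul_add {L a b R : ℝ} (hL : 0 ≤ L)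
    (hRab : R ≤ L * (a + b)) : R ≤ 2 * L * a ∨ R ≤ 2 * L * b := by
  rcases le_total a b with h | h
  · exact Or.inr (by nlinarith)
  · exact Or.inl (by nlinarith)

lemma mul_le_mul_add_of_min_le {x y c : ℝ} (hx : 0 ≤ x) (hy : 0 ≤ y) (h : min x y ≤ c) :
    x * y ≤ c * (x + y) := by
  rcases min_cases x y with ⟨hm, _⟩ | ⟨hm, _⟩ <;> rw [hm] at h <;> nlinarith

lemma AntitoneOn.mul_le_of_le_mul_add {Q : ℝ → ℝ} (hQ : AntitoneOn Q (Ici 0))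
    (hQ0 : ∀ s, 0 ≤ s → 0 ≤ Q s) {C₁ C₂ L a b R : ℝ} (hC₁ : 0 < C₁) (hC₂ : 0 < C₂) (hL : 0 < L)
    (ha : 0 ≤ a) (hb : 0 ≤ b) (hR : 0 ≤ R) (hRab : R ≤ L * (a + b)) :
    Q (C₁ * a) * Q (C₂ * b) ≤ Q 0 * Q (min C₁ C₂ / (2 * L) * R) := by
  have hC : 0 < min C₁ C₂ := lt_min hC₁ hC₂
  have hQR : 0 ≤ Q (min C₁ C₂ / (2 * L) * R) := hQ0 _ (by positivity)
  have far : ∀ {C r : ℝ}, min C₁ C₂ ≤ C → 0 ≤ r → R ≤ 2 * L * r →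
      Q (C * r) ≤ Q (min C₁ C₂ / (2 * L) * R) := by
    intro C r hCC hr hRr
    refine hQ (show 0 ≤ min C₁ C₂ / (2 * L) * R by positivity)
      (mul_nonneg (hC.le.trans hCC) hr) ?_
    calc min C₁ C₂ / (2 * L) * R ≤ min C₁ C₂ / (2 * L) * (2 * L * r) := by gcongr
      _ = min C₁ C₂ * r := by field_simp
      _ ≤ C * r := by gcongr
  have near : ∀ {C r : ℝ}, 0 < C → 0 ≤ r → Q (C * r) ≤ Q 0 := fun hC hr =>
    hQ self_mem_Ici (mul_nonneg hC.le hr) (mul_nonneg hC.le hr)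
  rcases le_two_mul_or_le_two_mul_of_le_mul_add hL.le hRab with hRa | hRb
  · rw [mul_comm (Q 0)]
    exact mul_le_mul (far (min_le_left _ _) ha hRa) (near hC₂ hb) (hQ0 _ (by positivity)) hQR
  · exact mul_le_mul (near hC₁ ha) (far (min_le_right _ _) hb hRb) (hQ0 _ (by positivity))
      (hQ0 0 le_rfl)

def stableKernel (d : ℕ) (α β h r : ℝ) : ℝ :=
  h ^ (-(d : ℝ) / α) * (1 + r / h ^ (1 / α)) ^ (-β)

namespace stableKernel

variable {d : ℕ} {α β h r S R : ℝ}

lemma nonneg (hh : 0 ≤ h) (hr : 0 ≤ r) : 0 ≤ stableKernel d α β h r := by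
  unfold stableKernel; positivity

lemma antitoneOn (hβ : 0 ≤ β) (hh : 0 ≤ h) : AntitoneOn (stableKernel d α β h) (Ici 0) := by
  intro r hr r' _ hrr'
  have hr0 : (0 : ℝ) ≤ r := hr
  refine mul_le_mul_of_nonneg_left ?_ (by positivity)
  exact rpow_le_rpow_of_nonpos (by positivity) (by gcongr) (neg_nonpos.2 hβ)

lemma measurable : Measurable (stableKernel d α β h) := by
  unfold stableKernel; fun_prop

lemma le_rpow (hβ : 0 ≤ β) (hh : 0 ≤ h) (hr : 0 ≤ r) :
    stableKernel d α β h r ≤ h ^ (-(d : ℝ) / α) := by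
  have : (1 + r / h ^ (1 / α)) ^ (-β) ≤ 1 :=
    rpow_le_one_of_one_le_of_nonpos (le_add_of_nonneg_right (by positivity)) (by linarith)
  calc _ ≤ h ^ (-(d : ℝ) / α) * 1 := by unfold stableKernel; gcongr
    _ = _ := mul_one _

lemma eq_rpow_mul (hh : 0 < h) (hr : 0 ≤ r) :
    stableKernel d α β h r = h ^ ((β - d) / α) * (h ^ (1 / α) + r) ^ (-β) := by
  have hh' : 0 < h ^ (1 / α) := rpow_pos_of_pos hh _
  have : 1 + r / h ^ (1 / α) = (h ^ (1 / α) + r) / h ^ (1 / α) := by field_simp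
  rw [stableKernel, this, div_rpow (by positivity) hh'.le, rpow_neg hh'.le, div_inv_eq_mul,
    ← rpow_mul hh.le, show (β - d) / α = -d / α + 1 / α * β by ring, rpow_add hh]
  ring

lemma rpow_le_two_rpow_mul (hβ : 0 ≤ β) (hS : 0 < S) (hR : 0 ≤ R) (hRS : R ≤ S ^ (1 / α)) :
    S ^ (-(d : ℝ) / α) ≤ 2 ^ β * stableKernel d α β S R := by
  have hS' : 0 < S ^ (1 / α) := rpow_pos_of_pos hS _
  have h2 : (2 : ℝ) ^ (-β) ≤ (1 + R / S ^ (1 / α)) ^ (-β) := by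
    refine rpow_le_rpow_of_nonpos (by positivity) ?_ (neg_nonpos.2 hβ)
    linarith [(div_le_one hS').2 hRS]
  calc S ^ (-(d : ℝ) / α) = 2 ^ β * (2 ^ (-β) * S ^ (-(d : ℝ) / α)) := by
        rw [← mul_assoc, ← rpow_add two_pos, add_neg_cancel, rpow_zero, one_mul]
    _ ≤ 2 ^ β * stableKernel d α β S R := by
        rw [stableKernel, mul_comm (S ^ _)]; gcongr

lemma le_two_rpow_mul_of_le_two_mul (hα : 0 < α) (hβ : 0 ≤ β) (hr : 0 ≤ r) (hS : 0 < S)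
    (hR : 0 ≤ R) (hSh : S ≤ 2 * h) (hRS : R ≤ S ^ (1 / α)) :
    stableKernel d α β h r ≤ 2 ^ (β + d / α) * stableKernel d α β S R := by
  have hh : 0 < h := by linarith
  calc stableKernel d α β h r ≤ h ^ (-(d : ℝ) / α) := le_rpow hβ hh.le hr
    _ ≤ (S / 2) ^ (-(d : ℝ) / α) :=
        rpow_le_rpow_of_nonpos (by positivity) (by linarith)
          (by rw [neg_div]; exact neg_nonpos.2 (by positivity))
    _ = 2 ^ (d / α : ℝ) * S ^ (-(d : ℝ) / α) := by
        rw [div_rpow hS.le zero_le_two, neg_div, rpow_neg hS.le, rpow_neg zero_le_two,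
          div_inv_eq_mul]
        ring
    _ ≤ 2 ^ (d / α : ℝ) * (2 ^ β * stableKernel d α β S R) := by
        gcongr; exact rpow_le_two_rpow_mul hβ hS hR hRS
    _ = 2 ^ (β + d / α) * stableKernel d α β S R := by
        rw [rpow_add two_pos]; ring

lemma le_rpow_mul_of_le_mul (hα : 0 < α) (hdβ : (d : ℝ) ≤ β) (hh : 0 < h) (hhS : h ≤ S)
    (hr : 0 ≤ r) (hR : 0 ≤ R) {c : ℝ} (hc : 0 < c) (hRr : S ^ (1 / α) + R ≤ c * r) :
    stableKernel d α β h r ≤ c ^ β * stableKernel d α β S R := by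
  have hβ : 0 ≤ β := (Nat.cast_nonneg d).trans hdβ
  have hS : 0 < S := hh.trans_le hhS
  rw [eq_rpow_mul hh hr, eq_rpow_mul hS hR]
  have h1 : h ^ ((β - d) / α) ≤ S ^ ((β - d) / α) :=
    rpow_le_rpow hh.le hhS (div_nonneg (by linarith) hα.le)
  have h2 : (h ^ (1 / α) + r) ^ (-β) ≤ c ^ β * (S ^ (1 / α) + R) ^ (-β) := by
    calc (h ^ (1 / α) + r) ^ (-β) ≤ ((S ^ (1 / α) + R) / c) ^ (-β) := by
          apply rpow_le_rpow_of_nonpos (by positivity) _ (neg_nonpos.2 hβ)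
          rw [div_le_iff₀' hc]
          have : 0 ≤ h ^ (1 / α) := by positivity
          nlinarith
      _ = c ^ β * (S ^ (1 / α) + R) ^ (-β) := by
          rw [div_rpow (by positivity) hc.le, rpow_neg hc.le, div_inv_eq_mul]; ring
  calc h ^ ((β - d) / α) * (h ^ (1 / α) + r) ^ (-β)
      ≤ S ^ ((β - d) / α) * (c ^ β * (S ^ (1 / α) + R) ^ (-β)) := by gcongr
    _ = _ := by ring

variable {u v a b L : ℝ}

lemma min_le_max_mul (hα : 0 < α) (hdβ : (d : ℝ) ≤ β) (hu : 0 < u) (hv : 0 < v) (ha : 0 ≤ a)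
    (hb : 0 ≤ b) (hL : 0 < L) (hR : 0 ≤ R) (hRab : R ≤ L * (a + b)) :
    min (stableKernel d α β u a) (stableKernel d α β v b) ≤
      max ((4 * L) ^ β) (2 ^ (β + d / α)) * stableKernel d α β (u + v) R := by
  have hβ : 0 ≤ β := (Nat.cast_nonneg d).trans hdβ
  have hS := nonneg (d := d) (α := α) (β := β) (add_pos hu hv).le hR
  set M := max ((4 * L) ^ β) (2 ^ (β + d / α))
  rcases le_total R ((u + v) ^ (1 / α)) with hnear | hfar
  · have near : ∀ {h r}, 0 ≤ r → u + v ≤ 2 * h →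
        stableKernel d α β h r ≤ M * stableKernel d α β (u + v) R :=
      fun hr hh => (le_two_rpow_mul_of_le_two_mul hα hβ hr (by positivity) hR hh hnear).trans
        (mul_le_mul_of_nonneg_right (le_max_right _ _) hS)
    rcases le_total u v with huv | huv
    · exact (min_le_right _ _).trans (near hb (by linarith))
    · exact (min_le_left _ _).trans (near ha (by linarith))
  · have far : ∀ {h r}, 0 < h → h ≤ u + v → 0 ≤ r → R ≤ 2 * L * r →
        stableKernel d α β h r ≤ M * stableKernel d α β (u + v) R :=
      fun hh hhS hr hRr => (le_rpow_mul_of_le_mul hα hdβ hh hhS hr hR (by positivity)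
        (by linarith)).trans (mul_le_mul_of_nonneg_right (le_max_left _ _) hS)
    rcases le_two_mul_or_le_two_mul_of_le_mul_add hL.le hRab with hRa | hRb
    · exact (min_le_left _ _).trans (far hu (by linarith) ha hRa)
    · exact (min_le_right _ _).trans (far hv (by linarith) hb hRb)

lemma mul_mul_le_mul_add (hα : 0 < α) (hdβ : (d : ℝ) ≤ β) {Q : ℝ → ℝ}
    (hQ : AntitoneOn Q (Ici 0)) (hQ0 : ∀ s, 0 ≤ s → 0 ≤ Q s) {C₁ C₂ : ℝ} (hC₁ : 0 < C₁)
    (hC₂ : 0 < C₂) (hu : 0 < u) (hv : 0 < v) (ha : 0 ≤ a) (hb : 0 ≤ b) (hL : 0 < L) (hR : 0 ≤ R)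
    (hRab : R ≤ L * (a + b)) :
    stableKernel d α β u a * Q (C₁ * a) * (stableKernel d α β v b * Q (C₂ * b)) ≤
      Q 0 * max ((4 * L) ^ β) (2 ^ (β + d / α)) *
        (stableKernel d α β (u + v) R * Q (min C₁ C₂ / (2 * L) * R)) *
          (stableKernel d α β u a + stableKernel d α β v b) := by
  have hua := nonneg (d := d) (α := α) (β := β) hu.le ha
  have hvb := nonneg (d := d) (α := α) (β := β) hv.le hb
  have hkernel := mul_le_mul_add_of_min_le hua hvb
    (min_le_max_mul (d := d) (β := β) hα hdβ hu hv ha hb hL hR hRab)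
  have hQ' := hQ.mul_le_of_le_mul_add hQ0 hC₁ hC₂ hL ha hb hR hRab
  calc stableKernel d α β u a * Q (C₁ * a) * (stableKernel d α β v b * Q (C₂ * b))
      = (stableKernel d α β u a * stableKernel d α β v b) * (Q (C₁ * a) * Q (C₂ * b)) := by ring
    _ ≤ _ := mul_le_mul hkernel hQ' (mul_nonneg (hQ0 _ (by positivity)) (hQ0 _ (by positivity)))
        ((mul_nonneg hua hvb).trans hkernel)
    _ = _ := by ring

variable {E : Type*} [NormedAddCommGroup E] [NormedSpace ℝ E]

lemma comp_norm_sub_div_eq (hh : 0 < h) (c : E) {l : ℝ} (hl : 0 < l) (z : E) :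
    stableKernel d α β h (‖z - c‖ / l) =
      h ^ (-(d : ℝ) / α) * (1 + ‖(l * h ^ (1 / α))⁻¹ • (z - c)‖) ^ (-β) := by
  have : 0 < h ^ (1 / α) := rpow_pos_of_pos hh _
  rw [stableKernel, norm_smul, norm_inv, Real.norm_of_nonneg (by positivity), div_div,
    mul_comm l, inv_mul_eq_div]

variable [MeasurableSpace E] [BorelSpace E] [FiniteDimensional ℝ E] {μ : Measure E}
  [μ.IsAddHaarMeasure]

lemma integrable_comp_norm_sub_div (hd : Module.finrank ℝ E = d) (hβ : (d : ℝ) < β)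
    (hh : 0 < h) (c : E) {l : ℝ} (hl : 0 < l) :
    Integrable (fun z => stableKernel d α β h (‖z - c‖ / l)) μ := by
  have : 0 < h ^ (1 / α) := rpow_pos_of_pos hh _
  simp_rw [comp_norm_sub_div_eq hh c hl]
  refine Integrable.const_mul ?_ _
  refine ((integrable_comp_smul_iff μ (fun z : E => (1 + ‖z‖) ^ (-β)) (by positivity)).2 ?_
    ).comp_sub_right c
  exact integrable_one_add_norm (by rwa [hd])

lemma integral_comp_norm_sub_div (hd : Module.finrank ℝ E = d) (hh : 0 < h) (c : E) {l : ℝ}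
    (hl : 0 < l) :
    ∫ z, stableKernel d α β h (‖z - c‖ / l) ∂μ = l ^ (d : ℝ) * ∫ z, (1 + ‖z‖) ^ (-β) ∂μ := by
  have hh' : 0 < h ^ (1 / α) := rpow_pos_of_pos hh _
  simp_rw [comp_norm_sub_div_eq hh c hl]
  rw [integral_const_mul,
    integral_sub_right_eq_self (fun z => (1 + ‖(l * h ^ (1 / α))⁻¹ • z‖) ^ (-β)) c,
    Measure.integral_comp_inv_smul_of_nonneg μ (fun z : E => (1 + ‖z‖) ^ (-β)) (by positivity),
    hd, smul_eq_mul, ← mul_assoc, ← rpow_natCast, mul_rpow hl.le hh'.le, ← rpow_mul hh.le,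
    mul_left_comm, ← rpow_add hh, show -(d : ℝ) / α + 1 / α * d = 0 by ring, rpow_zero, mul_one]

lemma integrable_and_integral_comp_le (hd : Module.finrank ℝ E = d) (hβ : (d : ℝ) < β) (hh : 0 < h)
    {a : E → ℝ} (ha : Measurable a) (ha0 : ∀ z, 0 ≤ a z) {c : E} {l : ℝ} (hl : 0 < l)
    (hac : ∀ z, ‖z - c‖ ≤ l * a z) :
    Integrable (fun z => stableKernel d α β h (a z)) μ ∧
      ∫ z, stableKernel d α β h (a z) ∂μ ≤ l ^ (d : ℝ) * ∫ z, (1 + ‖z‖) ^ (-β) ∂μ := by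
  have hβ0 : 0 ≤ β := (Nat.cast_nonneg d).trans hβ.le
  have hle : ∀ z, stableKernel d α β h (a z) ≤ stableKernel d α β h (‖z - c‖ / l) := fun z =>
    antitoneOn hβ0 hh.le (by positivity : (0 : ℝ) ≤ ‖z - c‖ / l) (ha0 z)
      ((div_le_iff₀' hl).2 (hac z))
  have hint := integrable_comp_norm_sub_div (μ := μ) (α := α) hd hβ hh c hl
  have hint' : Integrable (fun z => stableKernel d α β h (a z)) μ :=
    hint.mono' (measurable.comp ha).aestronglyMeasurable
      (Filter.Eventually.of_forall fun z => by
        rw [Real.norm_of_nonneg (nonneg hh.le (ha0 z))]; exact hle z)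
  refine ⟨hint', ?_⟩
  rw [← integral_comp_norm_sub_div hd hh c hl]
  exact integral_mono hint' hint hle

end stableKernel

lemma pbar_nonneg {d : ℕ} {α γ : ℝ}
    {θ : ℝ → ℝ → EuclideanSpace ℝ (Fin d) → EuclideanSpace ℝ (Fin d)} {Q : ℝ → ℝ} (hQ0 : ∀ s, 0 ≤ s → 0 ≤ Q s)
    {c t s : ℝ} (hc : 0 ≤ c) (hts : t ≤ s) (x y : EuclideanSpace ℝ (Fin d)) : 0 ≤ pbar d α γ θ Q c t s x y :=
  mul_nonneg (stableKernel.nonneg (sub_nonneg.2 hts) (norm_nonneg _)) (hQ0 _ (by positivity))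

theorem stmt4_general (d : ℕ) (T₀ α γ K : ℝ)
    (hα0 : 0 < α)
    (hαγ : (d : ℝ) < α + γ)
    (F : ℝ → EuclideanSpace ℝ (Fin d) → EuclideanSpace ℝ (Fin d))
    (hFlip : ∀ t ∈ Set.Icc (0:ℝ) T₀, ∀ x x' : EuclideanSpace ℝ (Fin d),
      ‖F t x - F t x'‖ ≤ K * ‖x - x'‖)
    (θ : ℝ → ℝ → EuclideanSpace ℝ (Fin d) → EuclideanSpace ℝ (Fin d))
    (hflow : ∀ s ∈ Set.Icc (0:ℝ) T₀, ∀ x : EuclideanSpace ℝ (Fin d),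
      θ s s x = x ∧ ∀ u ∈ Set.Icc (0:ℝ) T₀,
        HasDerivWithinAt (fun v => θ v s x) (F u (θ u s x)) (Set.Icc (0:ℝ) T₀) u)
    (Q : ℝ → ℝ) (hQmono : AntitoneOn Q (Set.Ici 0)) (hQnonneg : ∀ s : ℝ, 0 ≤ s → 0 ≤ Q s)
    (C₁ C₂ : ℝ) (hC₁ : 0 < C₁) (hC₂ : 0 < C₂) :
    ∃ C₃ > 0, ∃ C ≥ (1:ℝ), ∀ t τ T : ℝ, ∀ x y : EuclideanSpace ℝ (Fin d),
      0 ≤ t → t < τ → τ < T → T ≤ T₀ →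
        ∫ z, pbar d α γ θ Q C₁ t τ x z * pbar d α γ θ Q C₂ τ T z y ≤
          C * pbar d α γ θ Q C₃ t T x y := by
  have hθ : IsFlowOn F θ (Icc 0 T₀) := hflow
  have hF (t) (_ : t ∈ Icc (0 : ℝ) T₀) : LipschitzWith K.toNNReal (F t) :=
    .of_dist_le' fun p q => by simpa only [dist_eq_norm] using hFlip t ‹_› p q
  set L := exp (K.toNNReal * (T₀ - 0))
  have hL : 0 < L := exp_pos _
  set C₀ := ∫ ζ : EuclideanSpace ℝ (Fin d), (1 + ‖ζ‖) ^ (-(α + γ))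
  set M := max ((4 * L) ^ (α + γ)) (2 ^ (α + γ + d / α))
  refine ⟨min C₁ C₂ / (2 * L), by positivity, max 1 (Q 0 * M * ((L ^ (d : ℝ) + 1) * C₀)),
    le_max_left _ _, fun t τ T x y ht htτ hτT hTT₀ => ?_⟩
  have ht' : t ∈ Icc 0 T₀ := ⟨ht, by linarith⟩
  have hτ' : τ ∈ Icc 0 T₀ := ⟨by linarith, by linarith⟩
  have hT' : T ∈ Icc 0 T₀ := ⟨by linarith, hTT₀⟩
  set P := pbar d α γ θ Q (min C₁ C₂ / (2 * L)) t T x y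
  have hP : 0 ≤ P := pbar_nonneg hQnonneg (by positivity) (by linarith) x y
  have hpoint (z) : pbar d α γ θ Q C₁ t τ x z * pbar d α γ θ Q C₂ τ T z y ≤
      Q 0 * M * P * (stableKernel d α (α + γ) (τ - t) ‖θ t τ z - x‖ +
        stableKernel d α (α + γ) (T - τ) ‖θ τ T y - z‖) := by
    have := stableKernel.mul_mul_le_mul_add hα0 hαγ.le hQmono hQnonneg hC₁ hC₂ (sub_pos.2 htτ)
      (sub_pos.2 hτT) (norm_nonneg _) (norm_nonneg _) hL (norm_nonneg _)
      (hθ.norm_apply_sub_le hF ht' hτ' hT' x y z)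
    rwa [sub_add_sub_cancel'] at this
  have hθc : Continuous (θ t τ) := hθ.continuous hF ht' hτ'
  obtain ⟨hint₁, hle₁⟩ := stableKernel.integrable_and_integral_comp_le (μ := volume) (α := α)
    (a := fun z => ‖θ t τ z - x‖) finrank_euclideanSpace_fin hαγ (sub_pos.2 htτ) (by fun_prop)
    (fun _ => norm_nonneg _) hL (hθ.norm_sub_apply_le hF ht' hτ' x)
  obtain ⟨hint₂, hle₂⟩ := stableKernel.integrable_and_integral_comp_le (μ := volume) (α := α)
    (a := fun z => ‖θ τ T y - z‖) finrank_euclideanSpace_fin hαγ (sub_pos.2 hτT) (by fun_prop)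
    (fun _ => norm_nonneg _) one_pos (fun z => by rw [one_mul, norm_sub_rev])
  have hc : 0 ≤ Q 0 * M * P := by have := hQnonneg 0 le_rfl; positivity
  calc ∫ z, pbar d α γ θ Q C₁ t τ x z * pbar d α γ θ Q C₂ τ T z y
      ≤ ∫ z, Q 0 * M * P * (stableKernel d α (α + γ) (τ - t) ‖θ t τ z - x‖ +
          stableKernel d α (α + γ) (T - τ) ‖θ τ T y - z‖) :=
        integral_mono_of_nonneg (ae_of_all _ fun z => mul_nonneg
          (pbar_nonneg hQnonneg hC₁.le htτ.le x z) (pbar_nonneg hQnonneg hC₂.le hτT.le z y))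
          ((hint₁.add hint₂).const_mul _) (ae_of_all _ hpoint)
    _ ≤ Q 0 * M * P * (L ^ (d : ℝ) * C₀ + 1 ^ (d : ℝ) * C₀) := by
        rw [integral_const_mul, integral_add hint₁ hint₂]
        gcongr
    _ = Q 0 * M * ((L ^ (d : ℝ) + 1) * C₀) * P := by rw [one_rpow]; ring
    _ ≤ max 1 (Q 0 * M * ((L ^ (d : ℝ) + 1) * C₀)) * P := by gcongr; exact le_max_right _ _

/-- "semigroup" property of the bound `p̄`: for all `C₁, C₂ > 0` there are
`C₃ > 0` and `C ≥ 1` such that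
`∫ p̄_{C₁}(t,τ,x,z) p̄_{C₂}(τ,T,z,y) dz ≤ C p̄_{C₃}(t,T,x,y)`. -/
theorem stmt4 (d : ℕ) (hd : 1 ≤ d) (T₀ α γ η δ K : ℝ)
    (hT₀ : 0 < T₀) (hα0 : 0 < α) (hα2 : α < 2) (hγ1 : 1 ≤ γ) (hγd : γ ≤ (d : ℝ))
    (hαγ : (d : ℝ) < α + γ) (hη0 : 0 < η) (hη1 : η < 1) (hδ : 0 < δ) (hK : 0 < K)
    (F : ℝ → EuclideanSpace ℝ (Fin d) → EuclideanSpace ℝ (Fin d))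
    (hFmeas : Measurable (Function.uncurry F))
    (hFlip : ∀ t ∈ Set.Icc (0:ℝ) T₀, ∀ x x' : EuclideanSpace ℝ (Fin d),
      ‖F t x - F t x'‖ ≤ K * ‖x - x'‖)
    (hF0 : ∀ t ∈ Set.Icc (0:ℝ) T₀, ‖F t 0‖ ≤ K)
    (θ : ℝ → ℝ → EuclideanSpace ℝ (Fin d) → EuclideanSpace ℝ (Fin d))
    (hflow : ∀ s ∈ Set.Icc (0:ℝ) T₀, ∀ x : EuclideanSpace ℝ (Fin d),
      θ s s x = x ∧ ∀ u ∈ Set.Icc (0:ℝ) T₀,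
        HasDerivWithinAt (fun v => θ v s x) (F u (θ u s x)) (Set.Icc (0:ℝ) T₀) u)
    (Q : ℝ → ℝ) (hQmono : AntitoneOn Q (Set.Ici 0)) (hQnonneg : ∀ s : ℝ, 0 ≤ s → 0 ≤ Q s)
    (C₁ C₂ : ℝ) (hC₁ : 0 < C₁) (hC₂ : 0 < C₂) :
    ∃ C₃ > 0, ∃ C ≥ (1:ℝ), ∀ t τ T : ℝ, ∀ x y : EuclideanSpace ℝ (Fin d),
      0 ≤ t → t < τ → τ < T → T ≤ T₀ →
        ∫ z, pbar d α γ θ Q C₁ t τ x z * pbar d α γ θ Q C₂ τ T z y ≤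
          C * pbar d α γ θ Q C₃ t T x y :=
  stmt4_general d T₀ α γ K hα0 hαγ F hFlip θ hflow Q hQmono hQnonneg C₁ C₂ hC₁ hC₂
end
end

section
/- There exists a constant C > 0, depending only on α, κ and the doubling constant C_D, such that ν_S(A) ≤ C · T_{q̄, μ_S}(A) for every Borel set A ⊆ ℝ^d; that is, the image Lévy measure ν_S again satisfies the tempered stable domination, with the same temperation q̄ and with spectral measure μ_S. -/
/-! Disintegrating over `v`, `ν_S(A) = ∫₀¹ ν(σ_v⁻¹ A) dv ≤ ∫₀¹ T_{q̄,μ}(σ_v⁻¹ A) dv`.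
For a unit direction `ς` put `c = |σ_v ς| ∈ [κ⁻¹, κ]`: the ray `s ↦ σ_v (s ς) = (c s) (σ_v ς / c)`
runs along the direction `σ_v ς / c`, and the substitution `r = c s` turns its `T`-mass into `c^α`
(the density defining `μ_S`) times a radial integral in which `q̄(s)` has become `q̄(r / c)`.
Once `κ ≤ 2^N`, iterating the doubling property gives `q̄(r / c) ≤ C_D^N q̄(r)`, so `C = C_D^N`
works. The disintegration needs `ν` to be σ-finite, which holds because `T_{q̄,μ}` is finite away
from the origin. -/

open MeasureTheory
open scoped ENNReal

noncomputable section

/-- Action of a `d × d` matrix on a vector of `EuclideanSpace ℝ (Fin d)`. -/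
def matVec {d : ℕ} (M : Matrix (Fin d) (Fin d) ℝ) (x : EuclideanSpace ℝ (Fin d)) :
    EuclideanSpace ℝ (Fin d) :=
  (EuclideanSpace.equiv (Fin d) ℝ).symm (M.mulVec (EuclideanSpace.equiv (Fin d) ℝ x))

/-- The tempered stable dominating measure
`T_{q,m}(A) = ∫_{S^{d−1}} ∫_0^∞ 1_A(sθ) q(s) s^{−1−α} ds m(dθ)`. -/
def temperedDom (d : ℕ) (α : ℝ) (q : ℝ → ℝ) (m : Measure (EuclideanSpace ℝ (Fin d)))
    (A : Set (EuclideanSpace ℝ (Fin d))) : ℝ≥0∞ :=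
  ∫⁻ θv, (∫⁻ s in Set.Ioi (0:ℝ),
    Set.indicator A (fun _ => ENNReal.ofReal (q s / s ^ (1 + α))) (s • θv)) ∂m

/-- The image Lévy measure `ν_S`: image of `dv ⊗ ν(dξ)` on `[0,1] × ℝ^d` under
`(v,ξ) ↦ σ_v ξ`. -/
def nuS (d : ℕ) (σ : ℝ → Matrix (Fin d) (Fin d) ℝ) (ν : Measure (EuclideanSpace ℝ (Fin d))) :
    Measure (EuclideanSpace ℝ (Fin d)) :=
  Measure.map (fun p : ℝ × EuclideanSpace ℝ (Fin d) => matVec (σ p.1) p.2)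
    (((volume : Measure ℝ).restrict (Set.Icc 0 1)).prod ν)

/-- The image spectral measure `μ_S`: image of `|σ_v ς|^α dv μ(dς)` on `[0,1] × S^{d−1}` under
`(v,ς) ↦ σ_v ς / |σ_v ς|`. -/
def muS (d : ℕ) (α : ℝ) (σ : ℝ → Matrix (Fin d) (Fin d) ℝ)
    (μ : Measure (EuclideanSpace ℝ (Fin d))) : Measure (EuclideanSpace ℝ (Fin d)) :=
  Measure.map (fun p : ℝ × EuclideanSpace ℝ (Fin d) => ‖matVec (σ p.1) p.2‖⁻¹ • matVec (σ p.1) p.2)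
    (((((volume : Measure ℝ).restrict (Set.Icc 0 1)).prod μ).withDensity
      (fun p => ENNReal.ofReal (‖matVec (σ p.1) p.2‖ ^ α))))

open Set

section TemperedRadial

variable {E F : Type*} [NormedAddCommGroup E] [NormedSpace ℝ E]
  [NormedAddCommGroup F] [NormedSpace ℝ F]

def temperedRadial (α : ℝ) (q : ℝ → ℝ) (A : Set E) (θ : E) : ℝ≥0∞ :=
  ∫⁻ s in Ioi (0:ℝ), A.indicator (fun _ => ENNReal.ofReal (q s / s ^ (1 + α))) (s • θ)

theorem temperedDom_eq_lintegral_temperedRadial (d : ℕ) (α : ℝ) (q : ℝ → ℝ)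
    (m : Measure (EuclideanSpace ℝ (Fin d))) (A : Set (EuclideanSpace ℝ (Fin d))) :
    temperedDom d α q m A = ∫⁻ θ, temperedRadial α q A θ ∂m :=
  rfl

theorem temperedRadial_preimage (L : E →ₗ[ℝ] F) (α : ℝ) (q : ℝ → ℝ) (A : Set F) (θ : E) :
    temperedRadial α q (L ⁻¹' A) θ = temperedRadial α q A (L θ) := by
  refine lintegral_congr fun s => ?_
  rw [← map_smul]
  exact indicator_comp_right (g := fun _ => _) L

theorem lintegral_Ioi_comp_mul_left {c : ℝ} (hc : 0 < c) (f : ℝ → ℝ≥0∞) :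
    ∫⁻ s in Ioi 0, f (c * s) = ENNReal.ofReal c⁻¹ * ∫⁻ r in Ioi 0, f r := by
  have he : MeasurableEmbedding (c * ·) := (Homeomorph.mulLeft₀ c hc.ne').measurableEmbedding
  have hpre : (c * ·) ⁻¹' Ioi (0:ℝ) = Ioi 0 := by
    rw [preimage_const_mul_Ioi₀ _ hc, zero_div]
  conv_lhs => rw [← hpre]
  rw [← he.lintegral_map, ← he.restrict_map, Real.map_volume_mul_left hc.ne',
    abs_of_pos (inv_pos.2 hc), Measure.restrict_smul, lintegral_smul_measure, smul_eq_mul]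

theorem le_pow_mul_two_pow_mul_of_doubling {q : ℝ → ℝ} {C : ℝ} (hC : 0 ≤ C)
    (hdoub : ∀ s, 0 < s → q s ≤ C * q (2 * s)) (N : ℕ) {s : ℝ} (hs : 0 < s) :
    q s ≤ C ^ N * q (2 ^ N * s) := by
  induction N with
  | zero => simp
  | succ n ih =>
    calc q s ≤ C ^ n * q (2 ^ n * s) := ih
      _ ≤ C ^ n * (C * q (2 * (2 ^ n * s))) :=
        mul_le_mul_of_nonneg_left (hdoub _ (by positivity)) (pow_nonneg hC n)
      _ = C ^ (n + 1) * q (2 ^ (n + 1) * s) := by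
        rw [pow_succ C n, pow_succ' (2:ℝ) n, mul_assoc (C ^ n), mul_assoc (2:ℝ)]

theorem AntitoneOn.le_pow_mul_of_doubling {q : ℝ → ℝ} (hq : AntitoneOn q (Ioi 0)) {C : ℝ}
    (hC : 0 ≤ C) (hdoub : ∀ s, 0 < s → q s ≤ C * q (2 * s)) (N : ℕ) {s t : ℝ} (ht : 0 < t)
    (hts : t ≤ 2 ^ N * s) : q s ≤ C ^ N * q t := by
  have hs : 0 < s := pos_of_mul_pos_right (ht.trans_le hts) (by positivity)
  calc q s ≤ C ^ N * q (2 ^ N * s) := le_pow_mul_two_pow_mul_of_doubling hC hdoub N hs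
    _ ≤ C ^ N * q t :=
      mul_le_mul_of_nonneg_left (hq ht (mem_Ioi.2 (by positivity)) hts) (pow_nonneg hC N)

theorem AntitoneOn.div_rpow_div_le_of_doubling {α : ℝ} {q : ℝ → ℝ} (hq : AntitoneOn q (Ioi 0))
    {C : ℝ} (hC : 0 ≤ C) (hdoub : ∀ s, 0 < s → q s ≤ C * q (2 * s)) {N : ℕ} {c r : ℝ}
    (hc : 0 < c) (hcN : c ≤ 2 ^ N) (hr : 0 < r) :
    q (r / c) / (r / c) ^ (1 + α) ≤ C ^ N * c ^ (1 + α) * (q r / r ^ (1 + α)) := by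
  have hrc : r ≤ 2 ^ N * (r / c) := by
    rw [← mul_div_assoc, le_div_iff₀ hc]
    nlinarith
  calc q (r / c) / (r / c) ^ (1 + α) = c ^ (1 + α) * q (r / c) / r ^ (1 + α) := by
        rw [Real.div_rpow hr.le hc.le]
        field_simp
    _ ≤ c ^ (1 + α) * (C ^ N * q r) / r ^ (1 + α) := by
        gcongr
        exact hq.le_pow_mul_of_doubling hC hdoub N hr hrc
    _ = C ^ N * c ^ (1 + α) * (q r / r ^ (1 + α)) := by ring

theorem temperedRadial_smul_le {α : ℝ} {q : ℝ → ℝ} (hq : AntitoneOn q (Ioi 0)) {C : ℝ}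
    (hC : 0 ≤ C) (hdoub : ∀ s, 0 < s → q s ≤ C * q (2 * s)) {N : ℕ} {c : ℝ} (hc : 0 < c)
    (hcN : c ≤ 2 ^ N) (A : Set E) (u : E) :
    temperedRadial α q A (c • u) ≤ ENNReal.ofReal (C ^ N * c ^ α) * temperedRadial α q A u := by
  set g : ℝ → ℝ≥0∞ := fun r =>
    A.indicator (fun _ => ENNReal.ofReal (q (r / c) / (r / c) ^ (1 + α))) (r • u)
  have hcα : ENNReal.ofReal c⁻¹ * ENNReal.ofReal (C ^ N * c ^ (1 + α)) =
      ENNReal.ofReal (C ^ N * c ^ α) := by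
    rw [← ENNReal.ofReal_mul (by positivity), Real.rpow_add hc, Real.rpow_one]
    congr 1
    field_simp
  calc temperedRadial α q A (c • u) = ∫⁻ s in Ioi 0, g (c * s) := by
        refine lintegral_congr fun s => ?_
        simp only [g, smul_smul, mul_div_cancel_left₀ s hc.ne', mul_comm s c]
    _ = ENNReal.ofReal c⁻¹ * ∫⁻ r in Ioi 0, g r := lintegral_Ioi_comp_mul_left hc g
    _ ≤ ENNReal.ofReal c⁻¹ * ∫⁻ r in Ioi 0, ENNReal.ofReal (C ^ N * c ^ (1 + α)) *
          A.indicator (fun _ => ENNReal.ofReal (q r / r ^ (1 + α))) (r • u) := by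
        refine mul_le_mul_right (setLIntegral_mono' measurableSet_Ioi fun r (hr : 0 < r) => ?_) _
        by_cases hru : r • u ∈ A
        · simp only [g, indicator_of_mem hru,
            ← ENNReal.ofReal_mul (by positivity : 0 ≤ C ^ N * c ^ (1 + α))]
          exact ENNReal.ofReal_le_ofReal (hq.div_rpow_div_le_of_doubling hC hdoub hc hcN hr)
        · simp only [g, indicator_of_notMem hru, mul_zero, le_refl]
    _ = ENNReal.ofReal (C ^ N * c ^ α) * temperedRadial α q A u := by
        rw [lintegral_const_mul' _ _ ENNReal.ofReal_ne_top, ← mul_assoc, hcα]; rfl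

theorem temperedRadial_le_lintegral_Ioi {α : ℝ} {q : ℝ → ℝ} (hq : AntitoneOn q (Ioi 0))
    {ε : ℝ} (hε : 0 < ε) {A : Set E} {θ : E} (hA : ∀ s, 0 < s → s • θ ∈ A → ε < s) :
    temperedRadial α q A θ ≤ ∫⁻ s in Ioi ε, ENNReal.ofReal (q ε * s ^ (-(1 + α))) := by
  calc temperedRadial α q A θ
      ≤ ∫⁻ s in Ioi 0, (Ioi ε).indicator (fun s => ENNReal.ofReal (q ε * s ^ (-(1 + α)))) s := by
        refine setLIntegral_mono' measurableSet_Ioi fun s (hs : 0 < s) => ?_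
        by_cases hsθ : s • θ ∈ A
        · have hεs := hA s hs hsθ
          rw [indicator_of_mem hsθ, indicator_of_mem (mem_Ioi.2 hεs), div_eq_mul_inv,
            ← Real.rpow_neg hs.le]
          exact ENNReal.ofReal_le_ofReal <|
            mul_le_mul_of_nonneg_right (hq hε hs hεs.le) (Real.rpow_nonneg hs.le _)
        · rw [indicator_of_notMem hsθ]
          exact zero_le
    _ = ∫⁻ s in Ioi ε, ENNReal.ofReal (q ε * s ^ (-(1 + α))) := by
        rw [lintegral_indicator measurableSet_Ioi, Measure.restrict_restrict measurableSet_Ioi,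
          inter_eq_left.2 (Ioi_subset_Ioi hε.le)]

theorem sigmaFinite_of_le_lintegral_temperedRadial [MeasurableSpace E] [BorelSpace E]
    {α : ℝ} {q : ℝ → ℝ} {m ν : Measure E} [IsFiniteMeasure m] (hm : ∀ᵐ θ ∂m, ‖θ‖ = 1)
    (hq : AntitoneOn q (Ioi 0)) (hα : 0 < α)
    (hν : ∀ A, MeasurableSet A → ν A ≤ ∫⁻ θ, temperedRadial α q A θ ∂m) : SigmaFinite ν := by
  set S : ℕ → Set E := fun n => {x | x = 0 ∨ 1 / ((n : ℝ) + 1) < ‖x‖}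
  refine ⟨⟨⟨S, fun _ => trivial, fun n => ?_, ?_⟩⟩⟩
  · set ε : ℝ := 1 / ((n : ℝ) + 1)
    have hε : 0 < ε := by positivity
    have hS : MeasurableSet (S n) :=
      (measurableSet_singleton 0).union (measurableSet_lt measurable_const measurable_norm)
    set B : ℝ≥0∞ := ∫⁻ s in Ioi ε, ENNReal.ofReal (q ε * s ^ (-(1 + α)))
    have hbound : ∀ᵐ θ ∂m, temperedRadial α q (S n) θ ≤ B := by
      refine hm.mono fun θ hθ => temperedRadial_le_lintegral_Ioi hq hε fun s hs hsθ => ?_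
      have hnorm : ‖s • θ‖ = s := by rw [norm_smul, hθ, mul_one, Real.norm_of_nonneg hs.le]
      rcases hsθ with h0 | hlt
      · rw [h0, norm_zero] at hnorm
        exact absurd hnorm.symm hs.ne'
      · rwa [hnorm] at hlt
    have hB : B < ∞ :=
      ((integrableOn_Ioi_rpow_of_lt (by linarith) hε).const_mul (q ε)).lintegral_lt_top
    calc ν (S n) ≤ ∫⁻ θ, temperedRadial α q (S n) θ ∂m := hν _ hS
      _ ≤ ∫⁻ _, B ∂m := lintegral_mono_ae hbound
      _ < ∞ := by
        rw [lintegral_const]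
        exact ENNReal.mul_lt_top hB (measure_lt_top m _)
  · refine eq_univ_of_forall fun x => mem_iUnion.2 ?_
    by_cases hx : x = 0
    · exact ⟨0, Or.inl hx⟩
    · obtain ⟨n, hn⟩ := exists_nat_one_div_lt (norm_pos_iff.2 hx)
      exact ⟨n, Or.inr hn⟩

theorem measurable_temperedRadial [MeasurableSpace E] [BorelSpace E] {α : ℝ} {q : ℝ → ℝ}
    (hq : AEMeasurable q (volume.restrict (Ioi 0))) {A : Set E} (hA : MeasurableSet A) :
    Measurable (temperedRadial α q A) := by
  have heq : temperedRadial α q A = fun θ => ∫⁻ s in Ioi 0,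
      A.indicator (fun _ => ENNReal.ofReal (hq.mk q s / s ^ (1 + α))) (s • θ) :=
    funext fun θ => lintegral_congr_ae (hq.ae_eq_mk.mono fun s hs => by simp only [hs])
  rw [heq]
  refine Measurable.lintegral_prod_right' (f := fun p : E × ℝ =>
    A.indicator (fun _ => ENNReal.ofReal (hq.mk q p.2 / p.2 ^ (1 + α))) (p.2 • p.1)) ?_
  exact Measurable.indicator
    (ENNReal.measurable_ofReal.comp ((hq.measurable_mk.comp measurable_snd).div
      (measurable_snd.pow_const _)))
    ((continuous_snd.smul continuous_fst).measurable hA)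

theorem lintegral_temperedRadial_preimage_le [MeasurableSpace E] {α : ℝ} {q : ℝ → ℝ}
    (hq : AntitoneOn q (Ioi 0)) {C : ℝ} (hC : 0 ≤ C) (hdoub : ∀ s, 0 < s → q s ≤ C * q (2 * s))
    {m : Measure E} (L : E →ₗ[ℝ] F) {N : ℕ} (hL : ∀ᵐ θ ∂m, 0 < ‖L θ‖ ∧ ‖L θ‖ ≤ 2 ^ N)
    (A : Set F) :
    ∫⁻ θ, temperedRadial α q (L ⁻¹' A) θ ∂m ≤ ENNReal.ofReal (C ^ N) *
      ∫⁻ θ, ENNReal.ofReal (‖L θ‖ ^ α) * temperedRadial α q A (‖L θ‖⁻¹ • L θ) ∂m := by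
  rw [← lintegral_const_mul' _ _ ENNReal.ofReal_ne_top]
  refine lintegral_mono_ae (hL.mono fun θ ⟨hpos, hle⟩ => ?_)
  have h := temperedRadial_smul_le (α := α) hq hC hdoub hpos hle A (‖L θ‖⁻¹ • L θ)
  rwa [smul_smul, mul_inv_cancel₀ hpos.ne', one_smul, ENNReal.ofReal_mul (pow_nonneg hC N),
    mul_assoc, ← temperedRadial_preimage] at h

end TemperedRadial

section ImageMeasures

variable {d : ℕ} {σ : ℝ → Matrix (Fin d) (Fin d) ℝ}

theorem measurable_matVec (hσ : ∀ i j, Measurable fun v => σ v i j) :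
    Measurable fun p : ℝ × EuclideanSpace ℝ (Fin d) => matVec (σ p.1) p.2 := by
  refine (EuclideanSpace.equiv (Fin d) ℝ).symm.continuous.measurable.comp
    (measurable_pi_lambda _ fun i => ?_)
  simp only [Matrix.mulVec, dotProduct]
  refine Finset.measurable_sum _ fun j _ => ?_
  exact ((hσ i j).comp measurable_fst).mul ((measurable_pi_apply j).comp
    ((EuclideanSpace.equiv (Fin d) ℝ).continuous.measurable.comp measurable_snd))

theorem nuS_apply (hσ : ∀ i j, Measurable fun v => σ v i j) (ν : Measure (EuclideanSpace ℝ (Fin d)))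
    [SFinite ν] {A : Set (EuclideanSpace ℝ (Fin d))} (hA : MeasurableSet A) :
    nuS d σ ν A = ∫⁻ v in Icc 0 1, ν (matVec (σ v) ⁻¹' A) := by
  rw [nuS, Measure.map_apply (measurable_matVec hσ) hA,
    Measure.prod_apply (measurable_matVec hσ hA)]
  rfl

theorem temperedDom_muS (hσ : ∀ i j, Measurable fun v => σ v i j)
    (μ : Measure (EuclideanSpace ℝ (Fin d))) [SFinite μ] {α : ℝ} {q : ℝ → ℝ}
    (hq : AEMeasurable q (volume.restrict (Ioi 0))) {A : Set (EuclideanSpace ℝ (Fin d))}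
    (hA : MeasurableSet A) :
    temperedDom d α q (muS d α σ μ) A = ∫⁻ v in Icc 0 1, ∫⁻ θ,
      ENNReal.ofReal (‖matVec (σ v) θ‖ ^ α) *
        temperedRadial α q A (‖matVec (σ v) θ‖⁻¹ • matVec (σ v) θ) ∂μ := by
  have hf := measurable_matVec hσ
  have hR := measurable_temperedRadial (α := α) hq hA
  have hg : Measurable fun p : ℝ × EuclideanSpace ℝ (Fin d) =>
      ‖matVec (σ p.1) p.2‖⁻¹ • matVec (σ p.1) p.2 := hf.norm.inv.smul hf
  have hRg : Measurable fun p : ℝ × EuclideanSpace ℝ (Fin d) =>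
      temperedRadial α q A (‖matVec (σ p.1) p.2‖⁻¹ • matVec (σ p.1) p.2) := hR.comp hg
  have hρ : Measurable fun p : ℝ × EuclideanSpace ℝ (Fin d) =>
      ENNReal.ofReal (‖matVec (σ p.1) p.2‖ ^ α) :=
    ENNReal.measurable_ofReal.comp (hf.norm.pow_const α)
  rw [temperedDom_eq_lintegral_temperedRadial, muS, lintegral_map hR hg,
    lintegral_withDensity_eq_lintegral_mul _ hρ hRg, lintegral_prod _ (hρ.mul hRg).aemeasurable]
  rfl

end ImageMeasures

theorem stmt11_general (d : ℕ) (α : ℝ) (hα0 : 0 < α)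
    (qbar : ℝ → ℝ) (hqmono : AntitoneOn qbar (Set.Ioi 0))
    (C_D : ℝ) (hCD : 0 < C_D) (hdoub : ∀ s : ℝ, 0 < s → qbar s ≤ C_D * qbar (2 * s))
    (μ : Measure (EuclideanSpace ℝ (Fin d))) (hμfin : IsFiniteMeasure μ)
    (hμsph : μ {θv : EuclideanSpace ℝ (Fin d) | ‖θv‖ ≠ 1} = 0)
    (ν : Measure (EuclideanSpace ℝ (Fin d)))
    (hdom : ∀ A : Set (EuclideanSpace ℝ (Fin d)), MeasurableSet A →
      ν A ≤ temperedDom d α qbar μ A)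
    (σ : ℝ → Matrix (Fin d) (Fin d) ℝ)
    (hσmeas : ∀ i j, Measurable (fun v : ℝ => σ v i j))
    (κ : ℝ) (hκ : 1 ≤ κ)
    (hell : ∀ v ∈ Set.Icc (0:ℝ) 1, ∀ ξ : EuclideanSpace ℝ (Fin d),
      κ⁻¹ * ‖ξ‖ ≤ ‖matVec (σ v) ξ‖ ∧ ‖matVec (σ v) ξ‖ ≤ κ * ‖ξ‖) :
    ∃ C > 0, ∀ A : Set (EuclideanSpace ℝ (Fin d)), MeasurableSet A →
      nuS d σ ν A ≤ ENNReal.ofReal C * temperedDom d α qbar (muS d α σ μ) A := by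
  obtain ⟨N, hN⟩ := pow_unbounded_of_one_lt κ one_lt_two
  have hsph : ∀ᵐ θ ∂μ, ‖θ‖ = 1 := by
    rw [ae_iff]
    simpa using hμsph
  have : SigmaFinite ν := sigmaFinite_of_le_lintegral_temperedRadial hsph hqmono hα0 hdom
  refine ⟨C_D ^ N, pow_pos hCD N, fun A hA => ?_⟩
  rw [nuS_apply hσmeas ν hA,
    temperedDom_muS hσmeas μ (aemeasurable_restrict_of_antitoneOn measurableSet_Ioi hqmono) hA,
    ← lintegral_const_mul' _ _ ENNReal.ofReal_ne_top]
  refine setLIntegral_mono' measurableSet_Icc fun v hv => ?_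
  have hnorm : ∀ᵐ θ ∂μ, 0 < ‖matVec (σ v) θ‖ ∧ ‖matVec (σ v) θ‖ ≤ 2 ^ N :=
    hsph.mono fun θ hθ => by
      obtain ⟨hlow, hup⟩ := hell v hv θ
      rw [hθ, mul_one] at hlow hup
      exact ⟨(inv_pos.2 (by linarith)).trans_le hlow, hup.trans hN.le⟩
  exact (hdom _ ((measurable_matVec hσmeas).comp measurable_prodMk_left hA)).trans
    (lintegral_temperedRadial_preimage_le hqmono hCD.le hdoub (Matrix.toLpLin 2 2 (σ v)) hnorm A)

/-- the image Lévy measure `ν_S` again satisfies the tempered stable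
domination, with the same temperation `qbar` and spectral measure `μ_S`, up to a constant
depending only on `α`, `κ` and the doubling constant `C_D`. -/
theorem stmt11 (d : ℕ) (hd : 1 ≤ d) (α : ℝ) (hα0 : 0 < α) (hα2 : α < 2)
    (qbar : ℝ → ℝ) (hqmono : AntitoneOn qbar (Set.Ioi 0)) (hqnonneg : ∀ s : ℝ, 0 < s → 0 ≤ qbar s)
    (C_D : ℝ) (hCD : 0 < C_D) (hdoub : ∀ s : ℝ, 0 < s → qbar s ≤ C_D * qbar (2 * s))
    (μ : Measure (EuclideanSpace ℝ (Fin d))) (hμfin : IsFiniteMeasure μ)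
    (hμsph : μ {θv : EuclideanSpace ℝ (Fin d) | ‖θv‖ ≠ 1} = 0)
    (ν : Measure (EuclideanSpace ℝ (Fin d)))
    (hdom : ∀ A : Set (EuclideanSpace ℝ (Fin d)), MeasurableSet A →
      ν A ≤ temperedDom d α qbar μ A)
    (σ : ℝ → Matrix (Fin d) (Fin d) ℝ)
    (hσmeas : ∀ i j, Measurable (fun v : ℝ => σ v i j))
    (hσinv : ∀ v ∈ Set.Icc (0:ℝ) 1, IsUnit (σ v).det)
    (κ : ℝ) (hκ : 1 ≤ κ)
    (hell : ∀ v ∈ Set.Icc (0:ℝ) 1, ∀ ξ : EuclideanSpace ℝ (Fin d),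
      κ⁻¹ * ‖ξ‖ ≤ ‖matVec (σ v) ξ‖ ∧ ‖matVec (σ v) ξ‖ ≤ κ * ‖ξ‖) :
    ∃ C > 0, ∀ A : Set (EuclideanSpace ℝ (Fin d)), MeasurableSet A →
      nuS d σ ν A ≤ ENNReal.ofReal C * temperedDom d α qbar (muS d α σ μ) A :=
  stmt11_general d α hα0 qbar hqmono C_D hCD hdoub μ hμfin hμsph ν hdom σ hσmeas κ hκ hell
end
end

section
/- Assume in addition that there are γ ∈ [1,d] and C_μ ≥ 1 with μ(B(θ,r) ∩ S^{d−1}) ≤ C_μ r^{γ−1} for all θ ∈ S^{d−1} and all r ∈ (0,1/2]. Then there exists a constant C > 0, depending only on κ, α, γ, C_μ and μ(S^{d−1}), such that μ_S(B(x,r) ∩ S^{d−1}) ≤ C r^{γ−1} for all x ∈ S^{d−1} and all r ∈ (0,1/2]. -/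
/-!
Fix `v ∈ [0,1]` and write `T = σ_v`. If `T ς / |T ς|` lies in `B(x, r)` for a unit vector `ς`,
then `ς` lies in `B(y, 2κ²r)` with `y = T⁻¹x / |T⁻¹x|`: the point `p = ς / |T ς|` has
`T p = T ς / |T ς|`, so `|p - T⁻¹x| ≤ κ r`, and normalization is `2/|p|`-Lipschitz at `p` with
`|p| ≥ κ⁻¹`. Hence every `v`-slice of the preimage of `B(x, r)` has `μ`-measure at most
`(C_μ + μ(S^{d−1})) (4κ²r)^{γ−1}` (the total mass takes over when `2κ²r > 1/2`), and integrating
the density `|σ_v ς|^α ≤ κ^α` over `v ∈ [0,1]` gives the bound.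
-/

open MeasureTheory Metric
open scoped ENNReal

noncomputable section

theorem Measurable.matVec {X : Type*} [MeasurableSpace X] {d : ℕ}
    {A : X → Matrix (Fin d) (Fin d) ℝ} {u : X → EuclideanSpace ℝ (Fin d)}
    (hA : ∀ i j, Measurable fun x => A x i j) (hu : Measurable u) :
    Measurable fun x => matVec (A x) (u x) := by
  refine (PiLp.continuous_toLp 2 _).measurable.comp (measurable_pi_lambda _ fun i => ?_)
  simp only [Matrix.mulVec, dotProduct]
  exact Finset.measurable_sum _ fun j _ =>
    (hA i j).mul ((measurable_pi_apply j).comp ((PiLp.continuous_ofLp 2 _).measurable.comp hu))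

theorem matVec_matVec_inv {d : ℕ} {M : Matrix (Fin d) (Fin d) ℝ} (h : IsUnit M.det)
    (x : EuclideanSpace ℝ (Fin d)) : matVec M (matVec M⁻¹ x) = x := by
  change WithLp.toLp 2 (M.mulVec (M⁻¹.mulVec (WithLp.ofLp x))) = x
  simp [Matrix.mulVec_mulVec, Matrix.mul_nonsing_inv _ h]

theorem Measure.map_withDensity_apply_le {α β : Type*} [MeasurableSpace α] [MeasurableSpace β]
    {ν : Measure α} {f : α → β} (hf : Measurable f) {g : α → ℝ≥0∞} {c : ℝ≥0∞}
    (hg : ∀ᵐ a ∂ν, g a ≤ c) {s : Set β} (hs : MeasurableSet s) :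
    (ν.withDensity g).map f s ≤ c * ν (f ⁻¹' s) := by
  rw [Measure.map_apply hf hs, withDensity_apply _ (hf hs), ← setLIntegral_const]
  exact lintegral_mono_ae (ae_restrict_of_ae hg)

theorem Measure.prod_apply_le_of_ae_le {α β : Type*} [MeasurableSpace α] [MeasurableSpace β]
    (ρ : Measure α) (μ : Measure β) [SFinite μ] {s : Set (α × β)} (hs : MeasurableSet s)
    {B : ℝ≥0∞} (h : ∀ᵐ a ∂ρ, μ (Prod.mk a ⁻¹' s) ≤ B) : ρ.prod μ s ≤ B * ρ Set.univ := by
  rw [Measure.prod_apply hs, ← lintegral_const]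
  exact lintegral_mono_ae h

theorem le_ofReal_mul_two_mul_rpow {φ : ℝ → ℝ≥0∞} {C M γ r : ℝ} (hC : 0 ≤ C) (hM : 0 ≤ M)
    (hγ : 1 ≤ γ) (hφM : ∀ ρ, φ ρ ≤ ENNReal.ofReal M)
    (hφ : ∀ ρ, 0 < ρ → ρ ≤ 1 / 2 → φ ρ ≤ ENNReal.ofReal (C * ρ ^ (γ - 1))) (hr : 0 < r) :
    φ r ≤ ENNReal.ofReal ((C + M) * (2 * r) ^ (γ - 1)) := by
  rcases le_or_gt r (1 / 2) with hr2 | hr2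
  · refine (hφ r hr hr2).trans (ENNReal.ofReal_le_ofReal ?_)
    gcongr <;> linarith
  · refine (hφM r).trans (ENNReal.ofReal_le_ofReal ?_)
    have : 1 ≤ (2 * r) ^ (γ - 1) := Real.one_le_rpow (by linarith) (by linarith)
    nlinarith

theorem muS_apply_le {d : ℕ} {α κ : ℝ} {σ : ℝ → Matrix (Fin d) (Fin d) ℝ}
    {μ : Measure (EuclideanSpace ℝ (Fin d))} [SFinite μ]
    (hσ : ∀ i j, Measurable fun v => σ v i j) (hα : 0 ≤ α) (hμ : ∀ᵐ ς ∂μ, ‖ς‖ = 1)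
    (hσκ : ∀ v ∈ Set.Icc (0:ℝ) 1, ∀ ς, ‖ς‖ = 1 → ‖matVec (σ v) ς‖ ≤ κ)
    {s : Set (EuclideanSpace ℝ (Fin d))} (hs : MeasurableSet s) {B : ℝ≥0∞}
    (hB : ∀ v ∈ Set.Icc (0:ℝ) 1,
      μ ((fun ς => NormedSpace.normalize (matVec (σ v) ς)) ⁻¹' s) ≤ B) :
    muS d α σ μ s ≤ ENNReal.ofReal (κ ^ α) * B := by
  have hmv : Measurable fun p : ℝ × EuclideanSpace ℝ (Fin d) => matVec (σ p.1) p.2 :=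
    .matVec (fun i j => (hσ i j).comp measurable_fst) measurable_snd
  have hdensity : ∀ᵐ p ∂(volume.restrict (Set.Icc (0:ℝ) 1)).prod μ,
      ENNReal.ofReal (‖matVec (σ p.1) p.2‖ ^ α) ≤ ENNReal.ofReal (κ ^ α) := by
    filter_upwards [Measure.quasiMeasurePreserving_fst.ae (ae_restrict_mem measurableSet_Icc),
      Measure.quasiMeasurePreserving_snd.ae hμ] with p hv hς
    gcongr
    exact hσκ p.1 hv p.2 hς
  refine (Measure.map_withDensity_apply_le (hmv.norm.inv.smul hmv) hdensity hs).trans ?_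
  gcongr
  refine (Measure.prod_apply_le_of_ae_le _ μ (hmv.norm.inv.smul hmv hs)
    ((ae_restrict_mem measurableSet_Icc).mono hB)).trans_eq ?_
  simp

namespace NormedSpace

variable {E : Type*} [NormedAddCommGroup E] [NormedSpace ℝ E]

theorem norm_normalize_sub_normalize_le {a : E} (ha : a ≠ 0) (b : E) :
    ‖normalize a - normalize b‖ ≤ 2 * ‖a - b‖ / ‖a‖ := by
  have hna : 0 < ‖a‖ := norm_pos_iff.2 ha
  have hb : ‖normalize b‖ ≤ 1 := by
    by_cases hb : b = 0
    · simp [hb]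
    · exact (norm_normalize_eq_one_iff.2 hb).le
  have hdecomp : normalize a - normalize b = ‖a‖⁻¹ • ((a - b) + (‖b‖ - ‖a‖) • normalize b) := by
    rw [sub_smul, norm_smul_normalize, sub_add_sub_cancel, smul_sub, smul_smul,
      inv_mul_cancel₀ hna.ne', one_smul]
    rfl
  rw [hdecomp, norm_smul, norm_inv, norm_norm, inv_mul_eq_div, two_mul]
  gcongr
  calc ‖a - b + (‖b‖ - ‖a‖) • normalize b‖ ≤ ‖a - b‖ + |‖b‖ - ‖a‖| * 1 := by
        grw [norm_add_le, norm_smul, Real.norm_eq_abs, hb]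
    _ ≤ ‖a - b‖ + ‖a - b‖ := by
        rw [mul_one, abs_sub_comm]; grw [abs_norm_sub_norm_le]

theorem normalize_mem_ball_of_normalize_map_mem_ball (T : E →ₗ[ℝ] E) {κ : ℝ} (hκ : 0 < κ)
    (hT : ∀ ξ, κ⁻¹ * ‖ξ‖ ≤ ‖T ξ‖ ∧ ‖T ξ‖ ≤ κ * ‖ξ‖) {x N ς : E} {r : ℝ} (hN : T N = x)
    (hς : ‖ς‖ = 1) (h : normalize (T ς) ∈ ball x r) :
    ς ∈ ball (normalize N) (2 * κ ^ 2 * r) := by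
  set t := ‖T ς‖
  have ht : κ⁻¹ ≤ t ∧ t ≤ κ := by simpa [hς] using hT ς
  have ht0 : 0 < t := (inv_pos.2 hκ).trans_le ht.1
  set p := t⁻¹ • ς
  have hp : ‖p‖ = t⁻¹ := by simp [p, norm_smul, hς, ht0.le]
  have hTp : T p = normalize (T ς) := by simp [p, t, normalize]
  have hnp : normalize p = ς := by
    rw [normalize_smul_of_pos (inv_pos.2 ht0), normalize_eq_self_of_norm_eq_one hς]
  have hpN : ‖p - N‖ ≤ κ * ‖normalize (T ς) - x‖ := by
    have := (hT (p - N)).1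
    rwa [map_sub, hTp, hN, inv_mul_le_iff₀ hκ] at this
  rw [mem_ball, dist_eq_norm] at h ⊢
  calc ‖ς - normalize N‖ = ‖normalize p - normalize N‖ := by rw [hnp]
    _ ≤ 2 * ‖p - N‖ / ‖p‖ :=
        norm_normalize_sub_normalize_le (by rw [← norm_ne_zero_iff, hp]; positivity) N
    _ = 2 * t * ‖p - N‖ := by rw [hp]; field_simp
    _ ≤ 2 * κ * (κ * ‖normalize (T ς) - x‖) := by gcongr; exact ht.2
    _ < 2 * κ ^ 2 * r := by rw [← mul_assoc, mul_assoc 2, ← sq]; gcongr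

theorem exists_measure_preimage_normalize_map_ball_le [MeasurableSpace E] {μ : Measure E}
    (hμ : ∀ᵐ ς ∂μ, ‖ς‖ = 1) (T : E →ₗ[ℝ] E) {κ : ℝ} (hκ : 0 < κ)
    (hT : ∀ ξ, κ⁻¹ * ‖ξ‖ ≤ ‖T ξ‖ ∧ ‖T ξ‖ ≤ κ * ‖ξ‖) {x N : E} (hx : x ≠ 0) (hN : T N = x)
    (r : ℝ) : ∃ y : E, ‖y‖ = 1 ∧
      μ ((fun ς => normalize (T ς)) ⁻¹' ball x r) ≤ μ (ball y (2 * κ ^ 2 * r) ∩ sphere 0 1) := by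
  have hN0 : N ≠ 0 := by
    rintro rfl
    exact hx (by rw [← hN, map_zero])
  refine ⟨normalize N, norm_normalize hN0, measure_mono_ae <| hμ.mono fun _ hς hmem => ?_⟩
  exact ⟨normalize_mem_ball_of_normalize_map_mem_ball T hκ hT hN hς hmem,
    mem_sphere_zero_iff_norm.2 hς⟩

end NormedSpace

theorem stmt12_general (d : ℕ) (α : ℝ) (hα0 : 0 < α)
    (μ : Measure (EuclideanSpace ℝ (Fin d))) (hμfin : IsFiniteMeasure μ)
    (hμsph : μ {θv : EuclideanSpace ℝ (Fin d) | ‖θv‖ ≠ 1} = 0)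
    (σ : ℝ → Matrix (Fin d) (Fin d) ℝ)
    (hσmeas : ∀ i j, Measurable (fun v : ℝ => σ v i j))
    (hσinv : ∀ v ∈ Set.Icc (0:ℝ) 1, IsUnit (σ v).det)
    (κ : ℝ) (hκ : 1 ≤ κ)
    (hell : ∀ v ∈ Set.Icc (0:ℝ) 1, ∀ ξ : EuclideanSpace ℝ (Fin d),
      κ⁻¹ * ‖ξ‖ ≤ ‖matVec (σ v) ξ‖ ∧ ‖matVec (σ v) ξ‖ ≤ κ * ‖ξ‖)
    (γ : ℝ) (hγ1 : 1 ≤ γ)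
    (C_μ : ℝ) (hCμ : 1 ≤ C_μ)
    (hconc : ∀ θv : EuclideanSpace ℝ (Fin d), ‖θv‖ = 1 → ∀ r : ℝ, 0 < r → r ≤ 1 / 2 →
      μ (ball θv r ∩ sphere (0 : EuclideanSpace ℝ (Fin d)) 1) ≤
        ENNReal.ofReal (C_μ * r ^ (γ - 1))) :
    ∃ C > 0, ∀ x : EuclideanSpace ℝ (Fin d), ‖x‖ = 1 → ∀ r : ℝ, 0 < r → r ≤ 1 / 2 →
      muS d α σ μ (ball x r ∩ sphere (0 : EuclideanSpace ℝ (Fin d)) 1) ≤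
        ENNReal.ofReal (C * r ^ (γ - 1)) := by
  have hκ0 : 0 < κ := one_pos.trans_le hκ
  set M := μ.real Set.univ
  refine ⟨κ ^ α * ((C_μ + M) * (4 * κ ^ 2) ^ (γ - 1)), by positivity, fun x hx r hr _ => ?_⟩
  have hμ1 : ∀ᵐ ς ∂μ, ‖ς‖ = 1 := ae_iff.2 hμsph
  refine (muS_apply_le (B := ENNReal.ofReal ((C_μ + M) * (2 * (2 * κ ^ 2 * r)) ^ (γ - 1)))
    hσmeas hα0.le hμ1 (fun v hv ς hς => by simpa [hς] using (hell v hv ς).2)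
    (measurableSet_ball.inter isClosed_sphere.measurableSet) fun v hv => ?_).trans_eq ?_
  · -- `matVec (σ v)` is definitionally `Matrix.toLpLin 2 2 (σ v)`.
    obtain ⟨y, hy, hslice⟩ := NormedSpace.exists_measure_preimage_normalize_map_ball_le hμ1
      (Matrix.toLpLin 2 2 (σ v)) hκ0 (hell v hv) (norm_ne_zero_iff.1 (by simp [hx]))
      (matVec_matVec_inv (hσinv v hv) x) r
    refine (measure_mono (Set.preimage_mono Set.inter_subset_left)).trans (hslice.trans ?_)
    exact le_ofReal_mul_two_mul_rpow (φ := fun ρ => μ (ball y ρ ∩ sphere 0 1)) (by linarith)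
      measureReal_nonneg hγ1
      (fun ρ => (measure_mono (Set.subset_univ _)).trans_eq
        (ofReal_measureReal (measure_ne_top μ _)).symm)
      (hconc y hy) (by positivity)
  · rw [← ENNReal.ofReal_mul (by positivity), show 2 * (2 * κ ^ 2 * r) = 4 * κ ^ 2 * r by ring,
      Real.mul_rpow (by positivity) hr.le]
    ring_nf

/-- if `μ(B(θ,r) ∩ S^{d−1}) ≤ C_μ r^{γ−1}` for all `θ ∈ S^{d−1}` and
`r ∈ (0,1/2]`, then `μ_S` satisfies the same concentration estimate, with a constant depending
only on `κ, α, γ, C_μ` and `μ(S^{d−1})`. -/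
theorem stmt12 (d : ℕ) (hd : 1 ≤ d) (α : ℝ) (hα0 : 0 < α) (hα2 : α < 2)
    (μ : Measure (EuclideanSpace ℝ (Fin d))) (hμfin : IsFiniteMeasure μ)
    (hμsph : μ {θv : EuclideanSpace ℝ (Fin d) | ‖θv‖ ≠ 1} = 0)
    (σ : ℝ → Matrix (Fin d) (Fin d) ℝ)
    (hσmeas : ∀ i j, Measurable (fun v : ℝ => σ v i j))
    (hσinv : ∀ v ∈ Set.Icc (0:ℝ) 1, IsUnit (σ v).det)
    (κ : ℝ) (hκ : 1 ≤ κ)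
    (hell : ∀ v ∈ Set.Icc (0:ℝ) 1, ∀ ξ : EuclideanSpace ℝ (Fin d),
      κ⁻¹ * ‖ξ‖ ≤ ‖matVec (σ v) ξ‖ ∧ ‖matVec (σ v) ξ‖ ≤ κ * ‖ξ‖)
    (γ : ℝ) (hγ1 : 1 ≤ γ) (hγd : γ ≤ (d : ℝ))
    (C_μ : ℝ) (hCμ : 1 ≤ C_μ)
    (hconc : ∀ θv : EuclideanSpace ℝ (Fin d), ‖θv‖ = 1 → ∀ r : ℝ, 0 < r → r ≤ 1 / 2 →
      μ (ball θv r ∩ sphere (0 : EuclideanSpace ℝ (Fin d)) 1) ≤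
        ENNReal.ofReal (C_μ * r ^ (γ - 1))) :
    ∃ C > 0, ∀ x : EuclideanSpace ℝ (Fin d), ‖x‖ = 1 → ∀ r : ℝ, 0 < r → r ≤ 1 / 2 →
      muS d α σ μ (ball x r ∩ sphere (0 : EuclideanSpace ℝ (Fin d)) 1) ≤
        ENNReal.ofReal (C * r ^ (γ - 1)) :=
  stmt12_general d α hα0 μ hμfin hμsph σ hσmeas hσinv κ hκ hell γ hγ1 C_μ hCμ hconc
end
end

section
/- There exists a constant c_α > 0 depending only on α such that the following holds. If ν₁ and ν₂ are Borel measures on ℝ^d with ν_i(A) ≤ T_{q̄,μ}(A) for i = 1,2 and |ν₁(A) − ν₂(A)| ≤ ε T_{q̄,μ}(A) for every Borel set A, for some ε ≥ 0, then for every ζ ∈ ℝ^d both integrals ∫_{ℝ^d} (1 − cos⟨ζ,ξ⟩) ν_i(dξ) are finite and | ∫_{ℝ^d} (1 − cos⟨ζ,ξ⟩) ν₁(dξ) − ∫_{ℝ^d} (1 − cos⟨ζ,ξ⟩) ν₂(dξ) | ≤ c_α · ε · M · μ(S^{d−1}) · |ζ|^α. -/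
open MeasureTheory
open scoped ENNReal InnerProductSpace

noncomputable section

/-!
Since `q̄ ≤ M`, every inequality against `T_{q̄,μ}` persists with `T_{q̄,μ}` replaced by `T_{M,μ}`,
the image of `μ ⊗ M s^{-1-α} ds` under `(θ, s) ↦ s θ`, which is a genuine measure `T`.
Hence `ν₁, ν₂ ≤ T` and `νᵢ ≤ νⱼ + ε T` as measures, so the two integrals of
`g ξ = 1 - cos ⟪ζ, ξ⟫` differ by at most `ε ∫ g dT`.
In polar coordinates `1 - cos ⟪ζ, s θ⟫ ≤ min 2 (‖ζ‖² s² / 2)` for `‖θ‖ = 1`, and splitting the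
radial integral at `s = 1 / ‖ζ‖` gives `∫ g dT ≤ (1 / (2 (2 - α)) + 2 / α) M ‖ζ‖^α μ(S^{d-1})`.
-/

open Set

theorem lintegral_Ioc_zero_rpow {r a : ℝ} (hr : -1 < r) (ha : 0 ≤ a) :
    ∫⁻ s in Ioc 0 a, ENNReal.ofReal (s ^ r) = ENNReal.ofReal (a ^ (r + 1) / (r + 1)) := by
  have hint : IntegrableOn (fun s : ℝ => s ^ r) (Ioc 0 a) := by
    rw [← intervalIntegrable_iff_integrableOn_Ioc_of_le ha]
    exact intervalIntegral.intervalIntegrable_rpow' hr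
  rw [← ofReal_integral_eq_lintegral_ofReal hint
    ((ae_restrict_iff' measurableSet_Ioc).2 (ae_of_all _ fun s hs => Real.rpow_nonneg hs.1.le _)),
    ← intervalIntegral.integral_of_le ha, integral_rpow (Or.inl hr),
    Real.zero_rpow (by linarith), sub_zero]

theorem lintegral_Ioi_rpow {r a : ℝ} (hr : r < -1) (ha : 0 < a) :
    ∫⁻ s in Ioi a, ENNReal.ofReal (s ^ r) = ENNReal.ofReal (-a ^ (r + 1) / (r + 1)) := by
  rw [← ofReal_integral_eq_lintegral_ofReal (integrableOn_Ioi_rpow_of_lt hr ha)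
    ((ae_restrict_iff' measurableSet_Ioi).2 (ae_of_all _ fun s hs =>
      Real.rpow_nonneg (ha.trans hs).le _)), integral_Ioi_rpow_of_lt hr ha]

-- Bounds `∫₀^∞ min 2 (s² / 2) s^(-1-α) ds`, using `s² / 2` on `(0, 1]` and `2` on `(1, ∞)`.
def levyConst (α : ℝ) : ℝ := 1 / (2 * (2 - α)) + 2 / α

theorem levyConst_pos {α : ℝ} (hα0 : 0 < α) (hα2 : α < 2) : 0 < levyConst α := by
  have : 0 < 2 - α := by linarith
  unfold levyConst
  positivity

theorem lintegral_min_sq_div_rpow_le {α : ℝ} (hα0 : 0 < α) (hα2 : α < 2) {b : ℝ} (hb : 0 ≤ b) :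
    ∫⁻ s in Ioi 0, ENNReal.ofReal (min 2 (b ^ 2 * s ^ 2 / 2) / s ^ (1 + α))
      ≤ ENNReal.ofReal (levyConst α * b ^ α) := by
  rcases hb.eq_or_lt with rfl | hb
  · simp
  set s₀ := b⁻¹
  have hs₀ : 0 < s₀ := inv_pos.2 hb
  rw [← Ioc_union_Ioi_eq_Ioi hs₀.le, lintegral_union measurableSet_Ioi Ioc_disjoint_Ioi_same]
  have near : ∫⁻ s in Ioc 0 s₀, ENNReal.ofReal (min 2 (b ^ 2 * s ^ 2 / 2) / s ^ (1 + α))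
      ≤ ENNReal.ofReal (b ^ 2 / 2) * ENNReal.ofReal (s₀ ^ (2 - α) / (2 - α)) := by
    calc _ ≤ ∫⁻ s in Ioc 0 s₀, ENNReal.ofReal (b ^ 2 / 2) * ENNReal.ofReal (s ^ (1 - α)) := by
          refine setLIntegral_mono' measurableSet_Ioc fun s ⟨hs, _⟩ => ?_
          rw [← ENNReal.ofReal_mul (by positivity)]
          refine ENNReal.ofReal_le_ofReal ?_
          calc min 2 (b ^ 2 * s ^ 2 / 2) / s ^ (1 + α) ≤ b ^ 2 * s ^ 2 / 2 / s ^ (1 + α) := by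
                gcongr; exact min_le_right _ _
            _ = b ^ 2 / 2 * s ^ (1 - α) := by
                rw [show (1 - α) = (2 : ℕ) - (1 + α) by push_cast; ring, Real.rpow_sub hs,
                  Real.rpow_natCast]
                ring
      _ = _ := by
          rw [lintegral_const_mul' _ _ ENNReal.ofReal_ne_top,
            lintegral_Ioc_zero_rpow (by linarith) hs₀.le]
          ring_nf
  have far : ∫⁻ s in Ioi s₀, ENNReal.ofReal (min 2 (b ^ 2 * s ^ 2 / 2) / s ^ (1 + α))
      ≤ ENNReal.ofReal 2 * ENNReal.ofReal (s₀ ^ (-α) / α) := by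
    calc _ ≤ ∫⁻ s in Ioi s₀, ENNReal.ofReal 2 * ENNReal.ofReal (s ^ (-(1 + α))) := by
          refine setLIntegral_mono' measurableSet_Ioi fun s hs => ?_
          rw [← ENNReal.ofReal_mul zero_le_two, Real.rpow_neg (hs₀.trans hs).le, ← div_eq_mul_inv]
          have := Real.rpow_pos_of_pos (hs₀.trans hs) (1 + α)
          exact ENNReal.ofReal_le_ofReal (by gcongr; exact min_le_left _ _)
      _ = _ := by
          rw [lintegral_const_mul' _ _ ENNReal.ofReal_ne_top,
            lintegral_Ioi_rpow (r := -(1 + α)) (by linarith) hs₀]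
          congr 2
          rw [show -(1 + α) + 1 = -α by ring]
          field_simp
  refine (add_le_add near far).trans_eq ?_
  rw [← ENNReal.ofReal_mul (by positivity), ← ENNReal.ofReal_mul zero_le_two,
    ← ENNReal.ofReal_add (by positivity) (by positivity)]
  congr 1
  have hs₀α : s₀ ^ (-α) = b ^ α := by rw [Real.inv_rpow hb.le, Real.rpow_neg hb.le, inv_inv]
  have hs₀2α : s₀ ^ (2 - α) = b ^ α / b ^ 2 := by
    rw [Real.rpow_sub hs₀, Real.rpow_two, Real.inv_rpow hb.le, inv_pow]
    field_simp
  rw [hs₀α, hs₀2α, levyConst]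
  field_simp

section Polar

variable {E : Type*} [MeasurableSpace E] [SMul ℝ E]

def polarMeasure (m : Measure E) (w : ℝ → ℝ≥0∞) : Measure E :=
  (m.prod ((volume.restrict (Ioi 0)).withDensity w)).map fun p => p.2 • p.1

theorem lintegral_polarMeasure [MeasurableSMul₂ ℝ E] (m : Measure E) {w : ℝ → ℝ≥0∞}
    (hw : Measurable w) {f : E → ℝ≥0∞} (hf : Measurable f) :
    ∫⁻ ξ, f ξ ∂polarMeasure m w = ∫⁻ θ, (∫⁻ s in Ioi (0 : ℝ), w s * f (s • θ)) ∂m := by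
  have hsmul : Measurable fun p : E × ℝ => p.2 • p.1 := measurable_snd.smul measurable_fst
  rw [polarMeasure, lintegral_map hf hsmul,
    lintegral_prod (fun p : E × ℝ => f (p.2 • p.1)) (hf.comp hsmul).aemeasurable]
  refine lintegral_congr fun θ => ?_
  exact lintegral_withDensity_eq_lintegral_mul _ hw (hf.comp (measurable_id.smul_const θ))

end Polar

theorem temperedDom_eq_polarMeasure {d : ℕ} {α : ℝ} (q : ℝ → ℝ)
    (m : Measure (EuclideanSpace ℝ (Fin d))) {A : Set (EuclideanSpace ℝ (Fin d))}
    (hA : MeasurableSet A) :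
    temperedDom d α q m A = polarMeasure m (fun s => ENNReal.ofReal (q s / s ^ (1 + α))) A := by
  have hsmul : Measurable fun p : EuclideanSpace ℝ (Fin d) × ℝ => p.2 • p.1 :=
    measurable_snd.smul measurable_fst
  rw [polarMeasure, Measure.map_apply hsmul hA, Measure.prod_apply (hsmul hA)]
  refine lintegral_congr fun θ => ?_
  have hAθ := measurable_prodMk_left (hsmul hA) (x := θ)
  rw [withDensity_apply _ hAθ, ← lintegral_indicator hAθ]
  rfl

theorem temperedDom_mono {d : ℕ} {α : ℝ} {q q' : ℝ → ℝ} (hq : ∀ s, 0 < s → q s ≤ q' s)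
    (m : Measure (EuclideanSpace ℝ (Fin d))) (A : Set (EuclideanSpace ℝ (Fin d))) :
    temperedDom d α q m A ≤ temperedDom d α q' m A :=
  lintegral_mono fun _ => setLIntegral_mono' measurableSet_Ioi fun s hs =>
    indicator_le_indicator (ENNReal.ofReal_le_ofReal
      (div_le_div_of_nonneg_right (hq s hs) (Real.rpow_nonneg (le_of_lt hs) _)))

section InnerProduct

variable {E : Type*} [NormedAddCommGroup E] [InnerProductSpace ℝ E]

theorem one_sub_cos_le_min (x : ℝ) : 1 - Real.cos x ≤ min 2 (x ^ 2 / 2) :=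
  le_min (by linarith [Real.neg_one_le_cos x])
    (by linarith [Real.one_sub_sq_div_two_le_cos (x := x)])

theorem one_sub_cos_inner_smul_le (ζ : E) {θ : E} (hθ : ‖θ‖ = 1) (s : ℝ) :
    1 - Real.cos ⟪ζ, s • θ⟫_ℝ ≤ min 2 (‖ζ‖ ^ 2 * s ^ 2 / 2) := by
  refine (one_sub_cos_le_min _).trans (min_le_min_left _ ?_)
  have h : |⟪ζ, θ⟫_ℝ| ≤ ‖ζ‖ := by simpa [hθ] using abs_real_inner_le_norm ζ θ
  rw [real_inner_smul_right, mul_pow, mul_comm (s ^ 2)]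
  gcongr ?_ * _ / 2
  exact sq_le_sq' (abs_le.1 h).1 (abs_le.1 h).2

variable [MeasurableSpace E] [OpensMeasurableSpace E] [MeasurableSMul₂ ℝ E] {α M : ℝ} {μ : Measure E}

theorem lintegral_one_sub_cos_polarMeasure_le (hα0 : 0 < α) (hα2 : α < 2) (hM : 0 ≤ M)
    (hμ : ∀ᵐ θ ∂μ, ‖θ‖ = 1) (ζ : E) :
    ∫⁻ ξ, ENNReal.ofReal (1 - Real.cos ⟪ζ, ξ⟫_ℝ)
        ∂polarMeasure μ (fun s => ENNReal.ofReal (M / s ^ (1 + α)))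
      ≤ ENNReal.ofReal M * ENNReal.ofReal (levyConst α * ‖ζ‖ ^ α) * μ univ := by
  rw [lintegral_polarMeasure μ (by fun_prop) (by fun_prop), ← lintegral_const]
  refine lintegral_mono_ae (hμ.mono fun θ hθ => ?_)
  calc ∫⁻ s in Ioi 0, ENNReal.ofReal (M / s ^ (1 + α)) * ENNReal.ofReal (1 - Real.cos ⟪ζ, s • θ⟫_ℝ)
      ≤ ∫⁻ s in Ioi 0, ENNReal.ofReal M *
          ENNReal.ofReal (min 2 (‖ζ‖ ^ 2 * s ^ 2 / 2) / s ^ (1 + α)) := by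
        refine setLIntegral_mono' measurableSet_Ioi fun s hs => ?_
        have hs' := Real.rpow_pos_of_pos hs (1 + α)
        rw [← ENNReal.ofReal_mul (by positivity), ← ENNReal.ofReal_mul hM]
        refine ENNReal.ofReal_le_ofReal ?_
        calc M / s ^ (1 + α) * (1 - Real.cos ⟪ζ, s • θ⟫_ℝ)
            ≤ M / s ^ (1 + α) * min 2 (‖ζ‖ ^ 2 * s ^ 2 / 2) := by
              gcongr; exact one_sub_cos_inner_smul_le ζ hθ s
          _ = M * (min 2 (‖ζ‖ ^ 2 * s ^ 2 / 2) / s ^ (1 + α)) := by ring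
    _ = ENNReal.ofReal M *
          ∫⁻ s in Ioi 0, ENNReal.ofReal (min 2 (‖ζ‖ ^ 2 * s ^ 2 / 2) / s ^ (1 + α)) :=
        lintegral_const_mul' _ _ ENNReal.ofReal_ne_top
    _ ≤ _ := by gcongr; exact lintegral_min_sq_div_rpow_le hα0 hα2 (norm_nonneg ζ)

variable [IsFiniteMeasure μ]

theorem integrable_one_sub_cos_polarMeasure (hα0 : 0 < α) (hα2 : α < 2) (hM : 0 ≤ M)
    (hμ : ∀ᵐ θ ∂μ, ‖θ‖ = 1) (ζ : E) :
    Integrable (fun ξ => 1 - Real.cos ⟪ζ, ξ⟫_ℝ)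
      (polarMeasure μ fun s => ENNReal.ofReal (M / s ^ (1 + α))) := by
  refine ⟨by fun_prop, (hasFiniteIntegral_iff_ofReal (ae_of_all _ fun ξ => ?_)).2 ?_⟩
  · simpa using Real.cos_le_one _
  · exact (lintegral_one_sub_cos_polarMeasure_le hα0 hα2 hM hμ ζ).trans_lt
      (by simp [ENNReal.mul_lt_top, measure_lt_top])

theorem integral_one_sub_cos_polarMeasure_le (hα0 : 0 < α) (hα2 : α < 2) (hM : 0 ≤ M)
    (hμ : ∀ᵐ θ ∂μ, ‖θ‖ = 1) (ζ : E) :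
    ∫ ξ, (1 - Real.cos ⟪ζ, ξ⟫_ℝ) ∂polarMeasure μ (fun s => ENNReal.ofReal (M / s ^ (1 + α)))
      ≤ M * (levyConst α * ‖ζ‖ ^ α) * μ.real univ := by
  rw [integral_eq_lintegral_of_nonneg_ae (ae_of_all _ fun ξ => by simpa using Real.cos_le_one _)
    (by fun_prop)]
  refine (ENNReal.toReal_mono (by finiteness)
    (lintegral_one_sub_cos_polarMeasure_le hα0 hα2 hM hμ ζ)).trans_eq ?_
  rw [ENNReal.toReal_mul, ENNReal.toReal_mul, ENNReal.toReal_ofReal hM,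
    ENNReal.toReal_ofReal (by have := levyConst_pos hα0 hα2; positivity), measureReal_def]

end InnerProduct

section Comparison

variable {X : Type*} [MeasurableSpace X] {ν₁ ν₂ T : Measure X} {c : ℝ≥0∞} {g : X → ℝ}

theorem integral_le_integral_add_of_le_add_smul (hc : c ≠ ∞) (hg : 0 ≤ g)
    (hg₂ : Integrable g ν₂) (hgT : Integrable g T) (h : ν₁ ≤ ν₂ + c • T) :
    ∫ x, g x ∂ν₁ ≤ ∫ x, g x ∂ν₂ + c.toReal * ∫ x, g x ∂T := by
  have hgcT := hgT.smul_measure hc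
  calc ∫ x, g x ∂ν₁ ≤ ∫ x, g x ∂(ν₂ + c • T) :=
        integral_mono_measure h (ae_of_all _ hg) (hg₂.add_measure hgcT)
    _ = _ := by rw [integral_add_measure hg₂ hgcT, integral_smul_measure, smul_eq_mul]

theorem abs_integral_sub_le_of_le_add_smul (hc : c ≠ ∞) (hg : 0 ≤ g) (hgT : Integrable g T)
    (h₁T : ν₁ ≤ T) (h₂T : ν₂ ≤ T) (h₁₂ : ν₁ ≤ ν₂ + c • T) (h₂₁ : ν₂ ≤ ν₁ + c • T) :
    |∫ x, g x ∂ν₁ - ∫ x, g x ∂ν₂| ≤ c.toReal * ∫ x, g x ∂T := by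
  rw [abs_sub_le_iff]
  constructor
  · linarith [integral_le_integral_add_of_le_add_smul hc hg (hgT.mono_measure h₂T) hgT h₁₂]
  · linarith [integral_le_integral_add_of_le_add_smul hc hg (hgT.mono_measure h₁T) hgT h₂₁]

end Comparison

theorem stmt15_general (d : ℕ) (α : ℝ) (hα0 : 0 < α) (hα2 : α < 2) :
    ∃ c_α > 0,
      ∀ (qbar : ℝ → ℝ) (M : ℝ), 0 < M →
        AntitoneOn qbar (Set.Ioi 0) → (∀ s : ℝ, 0 < s → 0 ≤ qbar s ∧ qbar s ≤ M) →
        ∀ μ : Measure (EuclideanSpace ℝ (Fin d)), IsFiniteMeasure μ →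
          μ {θv : EuclideanSpace ℝ (Fin d) | ‖θv‖ ≠ 1} = 0 →
        ∀ ν₁ ν₂ : Measure (EuclideanSpace ℝ (Fin d)), ∀ ε : ℝ, 0 ≤ ε →
          (∀ A : Set (EuclideanSpace ℝ (Fin d)), MeasurableSet A →
            ν₁ A ≤ temperedDom d α qbar μ A) →
          (∀ A : Set (EuclideanSpace ℝ (Fin d)), MeasurableSet A →
            ν₂ A ≤ temperedDom d α qbar μ A) →
          (∀ A : Set (EuclideanSpace ℝ (Fin d)), MeasurableSet A →
            ν₁ A ≤ ν₂ A + ENNReal.ofReal ε * temperedDom d α qbar μ A ∧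
            ν₂ A ≤ ν₁ A + ENNReal.ofReal ε * temperedDom d α qbar μ A) →
          ∀ ζ : EuclideanSpace ℝ (Fin d),
            Integrable (fun ξ => 1 - Real.cos ⟪ζ, ξ⟫_ℝ) ν₁ ∧
            Integrable (fun ξ => 1 - Real.cos ⟪ζ, ξ⟫_ℝ) ν₂ ∧
            |(∫ ξ, (1 - Real.cos ⟪ζ, ξ⟫_ℝ) ∂ν₁) - ∫ ξ, (1 - Real.cos ⟪ζ, ξ⟫_ℝ) ∂ν₂| ≤
              c_α * ε * M * (μ Set.univ).toReal * ‖ζ‖ ^ α := by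
  refine ⟨levyConst α, levyConst_pos hα0 hα2, ?_⟩
  intro qbar M hM _ hqM μ _ hμ ν₁ ν₂ ε hε hν₁ hν₂ hν₁₂ ζ
  set T := polarMeasure μ fun s => ENNReal.ofReal (M / s ^ (1 + α))
  have hdom : ∀ A, MeasurableSet A → temperedDom d α qbar μ A ≤ T A := fun A hA =>
    (temperedDom_mono (fun s hs => (hqM s hs).2) μ A).trans_eq (temperedDom_eq_polarMeasure _ μ hA)
  have h₁T : ν₁ ≤ T := Measure.le_iff.2 fun A hA => (hν₁ A hA).trans (hdom A hA)
  have h₂T : ν₂ ≤ T := Measure.le_iff.2 fun A hA => (hν₂ A hA).trans (hdom A hA)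
  have hle_add : ∀ {ν ν' : Measure (EuclideanSpace ℝ (Fin d))},
      (∀ A, MeasurableSet A → ν A ≤ ν' A + ENNReal.ofReal ε * temperedDom d α qbar μ A) →
      ν ≤ ν' + ENNReal.ofReal ε • T := fun h => Measure.le_iff.2 fun A hA => by
    rw [Measure.add_apply, Measure.smul_apply, smul_eq_mul]
    exact (h A hA).trans (by gcongr; exact hdom A hA)
  have hμ' : ∀ᵐ θ ∂μ, ‖θ‖ = 1 := ae_iff.2 (by simpa using hμ)
  have hgT := integrable_one_sub_cos_polarMeasure hα0 hα2 hM.le hμ' ζ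
  refine ⟨hgT.mono_measure h₁T, hgT.mono_measure h₂T, ?_⟩
  calc _ ≤ ε * ∫ ξ, (1 - Real.cos ⟪ζ, ξ⟫_ℝ) ∂T := by
        simpa [ENNReal.toReal_ofReal hε] using abs_integral_sub_le_of_le_add_smul
          ENNReal.ofReal_ne_top (fun ξ => by simpa using Real.cos_le_one _) hgT h₁T h₂T
          (hle_add fun A hA => (hν₁₂ A hA).1) (hle_add fun A hA => (hν₁₂ A hA).2)
    _ ≤ ε * (M * (levyConst α * ‖ζ‖ ^ α) * μ.real univ) := by
        gcongr; exact integral_one_sub_cos_polarMeasure_le hα0 hα2 hM.le hμ' ζ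
    _ = _ := by rw [measureReal_def]; ring

/-- there is `c_α > 0` depending only on `α` (and the dimension) such that if
`ν₁, ν₂ ≤ T_{q̄,μ}` and `|ν₁ − ν₂| ≤ ε T_{q̄,μ}`, then the Lévy-symbol-type integrals
`∫ (1 − cos⟨ζ,ξ⟩) νᵢ(dξ)` are finite and differ by at most `c_α ε M μ(S^{d−1}) |ζ|^α`. -/
theorem stmt15 (d : ℕ) (hd : 1 ≤ d) (α : ℝ) (hα0 : 0 < α) (hα2 : α < 2) :
    ∃ c_α > 0,
      ∀ (qbar : ℝ → ℝ) (M : ℝ), 0 < M →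
        AntitoneOn qbar (Set.Ioi 0) → (∀ s : ℝ, 0 < s → 0 ≤ qbar s ∧ qbar s ≤ M) →
        ∀ μ : Measure (EuclideanSpace ℝ (Fin d)), IsFiniteMeasure μ →
          μ {θv : EuclideanSpace ℝ (Fin d) | ‖θv‖ ≠ 1} = 0 →
        ∀ ν₁ ν₂ : Measure (EuclideanSpace ℝ (Fin d)), ∀ ε : ℝ, 0 ≤ ε →
          (∀ A : Set (EuclideanSpace ℝ (Fin d)), MeasurableSet A →
            ν₁ A ≤ temperedDom d α qbar μ A) →
          (∀ A : Set (EuclideanSpace ℝ (Fin d)), MeasurableSet A →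
            ν₂ A ≤ temperedDom d α qbar μ A) →
          (∀ A : Set (EuclideanSpace ℝ (Fin d)), MeasurableSet A →
            ν₁ A ≤ ν₂ A + ENNReal.ofReal ε * temperedDom d α qbar μ A ∧
            ν₂ A ≤ ν₁ A + ENNReal.ofReal ε * temperedDom d α qbar μ A) →
          ∀ ζ : EuclideanSpace ℝ (Fin d),
            Integrable (fun ξ => 1 - Real.cos ⟪ζ, ξ⟫_ℝ) ν₁ ∧
            Integrable (fun ξ => 1 - Real.cos ⟪ζ, ξ⟫_ℝ) ν₂ ∧
            |(∫ ξ, (1 - Real.cos ⟪ζ, ξ⟫_ℝ) ∂ν₁) - ∫ ξ, (1 - Real.cos ⟪ζ, ξ⟫_ℝ) ∂ν₂| ≤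
              c_α * ε * M * (μ Set.univ).toReal * ‖ζ‖ ^ α :=
  stmt15_general d α hα0 hα2
end
end
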